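/- arXiv:2602.23122 — 9 statements merged into one kernel-verified Lean document; each statement's English description precedes it below -/
import Mathlib

section
/- Let G be a finite simple graph on n ≥ 2 vertices with m edges. Then there exists a vertex subset U of G with |U| ≥ (2·log 2)·m/(n·log n) such that the induced subgraph G[U] is globally rigid in ℝ. (Logarithms are natural.) -/
open Finset

open scoped Classical

/-- A graph is globally rigid in ℝ: any two injective embeddings of its vertices into ℝ that
agree on the distances along edges agree on all pairwise distances. -/
def GloballyRigid {V : Type*} (G : SimpleGraph V) : Prop :=
  ∀ f g : V → ℝ, Function.Injective f → Function.Injective g →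
    (∀ x y, G.Adj x y → |f x - f y| = |g x - g y|) →
    ∀ x y, |f x - f y| = |g x - g y|

/-- The number of ordered pairs of adjacent vertices inside `W`. -/
noncomputable def Dcount {V : Type*} (G : SimpleGraph V) (W : Finset V) : ℕ :=
  ((W ×ˢ W).filter fun p => G.Adj p.1 p.2).card

/-- Injection counting: if `v ↦ (uu v, ww v)` is injective on `W`, the sum over `v ∈ W` of
the products of the two fiber sizes at `v` is at most `|W|²`. -/
lemma sum_fiber_mul_le {V : Type*} [DecidableEq V] (W : Finset V) (uu ww : V → ℝ)
    (hinj : ∀ x ∈ W, ∀ y ∈ W, uu x = uu y → ww x = ww y → x = y) :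
    ∑ v ∈ W, ((W.filter fun z => uu z = uu v).card * (W.filter fun z => ww z = ww v).card)
      ≤ W.card * W.card := by
  have hdisj : ∀ x ∈ W, ∀ y ∈ W, x ≠ y →
      Disjoint ((W.filter fun z => uu z = uu x) ×ˢ (W.filter fun z => ww z = ww x))
        ((W.filter fun z => uu z = uu y) ×ˢ (W.filter fun z => ww z = ww y)) := by
    intro x hx y hy hxy
    rw [Finset.disjoint_left]
    rintro ⟨p1, p2⟩ hp hq
    simp only [Finset.mem_product, Finset.mem_filter] at hp hq
    exact hxy (hinj x hx y hy (hp.1.2 ▸ hq.1.2.symm ▸ rfl) (hp.2.2 ▸ hq.2.2.symm ▸ rfl))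
  calc ∑ v ∈ W, ((W.filter fun z => uu z = uu v).card * (W.filter fun z => ww z = ww v).card)
      = ∑ v ∈ W, ((W.filter fun z => uu z = uu v) ×ˢ (W.filter fun z => ww z = ww v)).card := by
        simp [Finset.card_product]
    _ = (W.biUnion fun v =>
          (W.filter fun z => uu z = uu v) ×ˢ (W.filter fun z => ww z = ww v)).card :=
        (Finset.card_biUnion hdisj).symm
    _ ≤ (W ×ˢ W).card := by
        apply Finset.card_le_card
        intro p hp
        simp only [Finset.mem_biUnion, Finset.mem_product, Finset.mem_filter] at hp ⊢
        obtain ⟨v, _, ⟨h1, _⟩, ⟨h2, _⟩⟩ := hp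
        exact ⟨h1, h2⟩
    _ = W.card * W.card := by simp [Finset.card_product]

/-- Entropy-style inequality: `∑_v (log R_v + log C_v) ≤ N log N` for fibers of an
injective pair map. -/
lemma entropy_sum_le {V : Type*} [DecidableEq V] (W : Finset V) (uu ww : V → ℝ)
    (hinj : ∀ x ∈ W, ∀ y ∈ W, uu x = uu y → ww x = ww y → x = y) :
    ∑ v ∈ W, (Real.log ((W.filter fun z => uu z = uu v).card)
        + Real.log ((W.filter fun z => ww z = ww v).card))
      ≤ (W.card : ℝ) * Real.log W.card := by
  rcases W.eq_empty_or_nonempty with rfl | hWne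
  · simp
  have hN : 0 < (W.card : ℝ) := by exact_mod_cast Finset.card_pos.mpr hWne
  have key : ∀ v ∈ W,
      Real.log ((W.filter fun z => uu z = uu v).card)
        + Real.log ((W.filter fun z => ww z = ww v).card)
      ≤ Real.log W.card - 1 +
        (((W.filter fun z => uu z = uu v).card * (W.filter fun z => ww z = ww v).card : ℕ) : ℝ)
          / W.card := by
    intro v hv
    set R : ℕ := (W.filter fun z => uu z = uu v).card with hRdef
    set C : ℕ := (W.filter fun z => ww z = ww v).card with hCdef
    have hR : 0 < R := Finset.card_pos.mpr ⟨v, Finset.mem_filter.mpr ⟨hv, rfl⟩⟩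
    have hC : 0 < C := Finset.card_pos.mpr ⟨v, Finset.mem_filter.mpr ⟨hv, rfl⟩⟩
    have hRr : (0:ℝ) < R := by exact_mod_cast hR
    have hCr : (0:ℝ) < C := by exact_mod_cast hC
    have h1 : Real.log (((R * C : ℕ) : ℝ) / W.card) ≤ ((R * C : ℕ) : ℝ) / W.card - 1 :=
      Real.log_le_sub_one_of_pos (by positivity)
    have h2 : Real.log (((R * C : ℕ) : ℝ) / W.card)
        = Real.log R + Real.log C - Real.log W.card := by
      rw [Real.log_div (by positivity) (by positivity), Nat.cast_mul,
        Real.log_mul (ne_of_gt hRr) (ne_of_gt hCr)]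
    linarith [h2 ▸ h1]
  have hsum := Finset.sum_le_sum key
  have hsplit : ∑ v ∈ W, (Real.log W.card - 1 +
        (((W.filter fun z => uu z = uu v).card * (W.filter fun z => ww z = ww v).card : ℕ) : ℝ)
          / W.card)
      = (W.card : ℝ) * (Real.log W.card - 1) +
        ((∑ v ∈ W, ((W.filter fun z => uu z = uu v).card
          * (W.filter fun z => ww z = ww v).card) : ℕ) : ℝ) / W.card := by
    rw [Finset.sum_add_distrib, Finset.sum_const, ← Finset.sum_div]
    push_cast
    ring
  have hfinal : (W.card : ℝ) * (Real.log W.card - 1) +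
        ((∑ v ∈ W, ((W.filter fun z => uu z = uu v).card
          * (W.filter fun z => ww z = ww v).card) : ℕ) : ℝ) / W.card
      ≤ (W.card : ℝ) * Real.log W.card := by
    have h3 : ((∑ v ∈ W, ((W.filter fun z => uu z = uu v).card
          * (W.filter fun z => ww z = ww v).card) : ℕ) : ℝ) / W.card
        ≤ ((W.card * W.card : ℕ) : ℝ) / W.card := by
      gcongr
      exact_mod_cast sum_fiber_mul_le W uu ww hinj
    have h4 : ((W.card * W.card : ℕ) : ℝ) / W.card = (W.card : ℝ) := by
      push_cast; field_simp
    nlinarith [h3, h4]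
  calc _ ≤ _ := hsum
    _ = _ := hsplit
    _ ≤ _ := hfinal

/-- Rewriting a fiberwise sum over the image as a sum over the set. -/
lemma image_fiber_sum {V : Type*} [DecidableEq V] (W : Finset V) (h : V → ℝ) :
    ∑ a ∈ W.image h, ((W.filter fun z => h z = a).card : ℝ)
        * Real.log ((W.filter fun z => h z = a).card)
      = ∑ v ∈ W, Real.log ((W.filter fun z => h z = h v).card) := by
  rw [← Finset.sum_fiberwise_of_maps_to (fun x hx => Finset.mem_image_of_mem h hx)
    (fun v => Real.log ((W.filter fun z => h z = h v).card))]
  refine Finset.sum_congr rfl fun a _ => ?_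
  have hcongr : ∀ v ∈ W.filter (fun v => h v = a),
      Real.log ((W.filter fun z => h z = h v).card)
        = Real.log ((W.filter fun z => h z = a).card) := by
    intro v hv
    rw [(Finset.mem_filter.mp hv).2]
  rw [Finset.sum_congr rfl hcongr, Finset.sum_const, nsmul_eq_mul]

/-- Splitting the adjacent ordered pairs into row-pairs and column-pairs. -/
lemma Dcount_split {V : Type*} [DecidableEq V] (G : SimpleGraph V) (W : Finset V)
    (uu ww : V → ℝ)
    (hedge : ∀ x ∈ W, ∀ y ∈ W, G.Adj x y → uu x = uu y ∨ ww x = ww y)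
    (hboth : ∀ x ∈ W, ∀ y ∈ W, uu x = uu y → ww x = ww y → x = y) :
    Dcount G W = (∑ a ∈ W.image uu, Dcount G (W.filter fun z => uu z = a))
      + (∑ b ∈ W.image ww, Dcount G (W.filter fun z => ww z = b)) := by
  classical
  set P := ((W ×ˢ W).filter fun p => G.Adj p.1 p.2) with hP
  have hsplitcard : P.card = (P.filter fun p => uu p.1 = uu p.2).card
      + (P.filter fun p => ¬ uu p.1 = uu p.2).card :=
    (Finset.card_filter_add_card_filter_not _).symm
  have hrow : (P.filter fun p => uu p.1 = uu p.2)
      = (W.image uu).biUnion fun a =>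
        (((W.filter fun z => uu z = a) ×ˢ (W.filter fun z => uu z = a)).filter
          fun p => G.Adj p.1 p.2) := by
    ext ⟨p1, p2⟩
    simp only [Finset.mem_filter, Finset.mem_biUnion, Finset.mem_product, Finset.mem_image, hP]
    constructor
    · rintro ⟨⟨⟨h1, h2⟩, hadj⟩, hu⟩
      exact ⟨uu p1, ⟨p1, h1, rfl⟩, ⟨⟨h1, rfl⟩, h2, hu.symm⟩, hadj⟩
    · rintro ⟨a, _, ⟨⟨h1, e1⟩, h2, e2⟩, hadj⟩
      exact ⟨⟨⟨h1, h2⟩, hadj⟩, e1.trans e2.symm⟩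
  have hrowdisj : ∀ a ∈ W.image uu, ∀ b ∈ W.image uu, a ≠ b →
      Disjoint (((W.filter fun z => uu z = a) ×ˢ (W.filter fun z => uu z = a)).filter
          fun p => G.Adj p.1 p.2)
        (((W.filter fun z => uu z = b) ×ˢ (W.filter fun z => uu z = b)).filter
          fun p => G.Adj p.1 p.2) := by
    intro a _ b _ hab
    rw [Finset.disjoint_left]
    rintro ⟨p1, p2⟩ hp hq
    simp only [Finset.mem_filter, Finset.mem_product] at hp hq
    exact hab (hp.1.1.2.symm.trans hq.1.1.2)
  have hcoleq : (P.filter fun p => ¬ uu p.1 = uu p.2)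
      = (P.filter fun p => ww p.1 = ww p.2) := by
    ext ⟨p1, p2⟩
    simp only [Finset.mem_filter, Finset.mem_product, hP]
    constructor
    · rintro ⟨⟨⟨h1, h2⟩, hadj⟩, hu⟩
      refine ⟨⟨⟨h1, h2⟩, hadj⟩, ?_⟩
      rcases hedge p1 h1 p2 h2 hadj with h | h
      · exact absurd h hu
      · exact h
    · rintro ⟨⟨⟨h1, h2⟩, hadj⟩, hw⟩
      refine ⟨⟨⟨h1, h2⟩, hadj⟩, fun hu => ?_⟩
      exact G.ne_of_adj hadj (hboth p1 h1 p2 h2 hu hw)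
  have hcol : (P.filter fun p => ww p.1 = ww p.2)
      = (W.image ww).biUnion fun b =>
        (((W.filter fun z => ww z = b) ×ˢ (W.filter fun z => ww z = b)).filter
          fun p => G.Adj p.1 p.2) := by
    ext ⟨p1, p2⟩
    simp only [Finset.mem_filter, Finset.mem_biUnion, Finset.mem_product, Finset.mem_image, hP]
    constructor
    · rintro ⟨⟨⟨h1, h2⟩, hadj⟩, hw⟩
      exact ⟨ww p1, ⟨p1, h1, rfl⟩, ⟨⟨h1, rfl⟩, h2, hw.symm⟩, hadj⟩
    · rintro ⟨b, _, ⟨⟨h1, e1⟩, h2, e2⟩, hadj⟩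
      exact ⟨⟨⟨h1, h2⟩, hadj⟩, e1.trans e2.symm⟩
  have hcoldisj : ∀ a ∈ W.image ww, ∀ b ∈ W.image ww, a ≠ b →
      Disjoint (((W.filter fun z => ww z = a) ×ˢ (W.filter fun z => ww z = a)).filter
          fun p => G.Adj p.1 p.2)
        (((W.filter fun z => ww z = b) ×ˢ (W.filter fun z => ww z = b)).filter
          fun p => G.Adj p.1 p.2) := by
    intro a _ b _ hab
    rw [Finset.disjoint_left]
    rintro ⟨p1, p2⟩ hp hq
    simp only [Finset.mem_filter, Finset.mem_product] at hp hq
    exact hab (hp.1.1.2.symm.trans hq.1.1.2)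
  show P.card = _
  rw [hsplitcard, hrow, hcoleq, hcol, Finset.card_biUnion hrowdisj,
    Finset.card_biUnion hcoldisj]
  rfl

set_option linter.unnecessarySimpa false in
/-- Main counting lemma: if every rigid induced subgraph inside `W` has at most `s` vertices,
then the number of ordered adjacent pairs in `W` satisfies `D · log 2 ≤ s · |W| · log |W|`. -/
lemma main_count {V : Type*} [DecidableEq V] (G : SimpleGraph V) (s : ℝ) (hs : 0 ≤ s) :
    ∀ k, ∀ W : Finset V, W.card ≤ k →
      (∀ U : Finset V, U ⊆ W → GloballyRigid (SimpleGraph.induce (↑U : Set V) G) →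
        (U.card : ℝ) ≤ s) →
      (Dcount G W : ℝ) * Real.log 2 ≤ s * W.card * Real.log W.card := by
  intro k
  induction k with
  | zero =>
    intro W hW _
    have hWe : W = ∅ := Finset.card_eq_zero.mp (Nat.le_zero.mp hW)
    subst hWe
    simp [Dcount]
  | succ k ih =>
    intro W hWk hU
    by_cases hrig : GloballyRigid (SimpleGraph.induce (↑W : Set V) G)
    · -- rigid case : |W| ≤ s and Dcount ≤ N(N-1)
      have hsW : (W.card : ℝ) ≤ s := hU W Finset.Subset.rfl hrig
      have hsub : ((W ×ˢ W).filter fun p => G.Adj p.1 p.2) ⊆ W.offDiag := by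
        intro p hp
        simp only [Finset.mem_filter, Finset.mem_product] at hp
        exact Finset.mem_offDiag.mpr ⟨hp.1.1, hp.1.2, G.ne_of_adj hp.2⟩
      have hDnat : Dcount G W ≤ W.card * W.card - W.card := by
        have := Finset.card_le_card hsub
        rwa [Finset.offDiag_card] at this
      rcases Nat.lt_or_ge W.card 2 with h2 | h2
      · have hc : W.card = 0 ∨ W.card = 1 := by omega
        have hD0 : Dcount G W = 0 := by
          rcases hc with h | h <;> · rw [h] at hDnat; simpa using hDnat
        rw [hD0]
        rcases hc with h | h <;> rw [h] <;> simp
      · have h2r : (2 : ℝ) ≤ (W.card : ℝ) := by exact_mod_cast h2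
        have hlog2pos : (0:ℝ) < Real.log 2 := Real.log_pos (by norm_num)
        have hlogle : Real.log 2 ≤ Real.log W.card :=
          Real.log_le_log (by norm_num) h2r
        have hlogNpos : (0:ℝ) < Real.log W.card := lt_of_lt_of_le hlog2pos hlogle
        have hcard_le : W.card ≤ W.card * W.card := Nat.le_mul_of_pos_left _ (by omega)
        have hDr : (Dcount G W : ℝ) ≤ (W.card : ℝ) * W.card - W.card := by
          have := (Nat.cast_le (α := ℝ)).mpr hDnat
          rwa [Nat.cast_sub hcard_le, Nat.cast_mul] at this
        have hNnn : (0:ℝ) ≤ (W.card : ℝ) := by positivity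
        have hstep : ((W.card : ℝ) * W.card - W.card) * Real.log 2
            ≤ s * W.card * Real.log W.card := by
          have e2 : ((W.card : ℝ) - 1) * Real.log 2 ≤ s * Real.log W.card := by
            have h3 : ((W.card : ℝ) - 1) * Real.log 2
                ≤ ((W.card : ℝ) - 1) * Real.log W.card := by
              apply mul_le_mul_of_nonneg_left hlogle; linarith
            have h4 : ((W.card : ℝ) - 1) * Real.log W.card ≤ s * Real.log W.card := by
              apply mul_le_mul_of_nonneg_right _ (le_of_lt hlogNpos); linarith
            linarith
          calc ((W.card : ℝ) * W.card - W.card) * Real.log 2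
              = (W.card : ℝ) * (((W.card : ℝ) - 1) * Real.log 2) := by ring
            _ ≤ (W.card : ℝ) * (s * Real.log W.card) := mul_le_mul_of_nonneg_left e2 hNnn
            _ = s * W.card * Real.log W.card := by ring
        calc (Dcount G W : ℝ) * Real.log 2
            ≤ ((W.card : ℝ) * W.card - W.card) * Real.log 2 :=
              mul_le_mul_of_nonneg_right hDr (le_of_lt hlog2pos)
          _ ≤ s * W.card * Real.log W.card := hstep
    · -- non-rigid case : split via the fold functions
      have hne : ∃ f g : (↑W : Set V) → ℝ, Function.Injective f ∧ Function.Injective g ∧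
          (∀ x y, (SimpleGraph.induce (↑W : Set V) G).Adj x y → |f x - f y| = |g x - g y|) ∧
          ∃ x y, |f x - f y| ≠ |g x - g y| := by
        rw [GloballyRigid] at hrig; push_neg at hrig; exact hrig
      obtain ⟨f, g, hf, hg, hpres, x, y, hxy⟩ := hne
      set uu : V → ℝ := fun z => if h : z ∈ (↑W : Set V) then g ⟨z, h⟩ - f ⟨z, h⟩ else 0 with huu
      set ww : V → ℝ := fun z => if h : z ∈ (↑W : Set V) then g ⟨z, h⟩ + f ⟨z, h⟩ else 0 with hww
      have huuv : ∀ (z : (↑W : Set V)), uu ↑z = g z - f z := by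
        intro z; simp only [huu]; rw [dif_pos z.2]
      have hwwv : ∀ (z : (↑W : Set V)), ww ↑z = g z + f z := by
        intro z; simp only [hww]; rw [dif_pos z.2]
      have hedge : ∀ a ∈ W, ∀ b ∈ W, G.Adj a b → uu a = uu b ∨ ww a = ww b := by
        intro a ha b hb hadj
        have ha' : a ∈ (↑W : Set V) := by simpa using ha
        have hb' : b ∈ (↑W : Set V) := by simpa using hb
        have hd := hpres ⟨a, ha'⟩ ⟨b, hb'⟩ (by exact hadj)
        rw [abs_eq_abs] at hd
        rcases hd with h | h
        · left
          rw [show a = ((⟨a, ha'⟩ : (↑W : Set V)) : V) from rfl,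
            show b = ((⟨b, hb'⟩ : (↑W : Set V)) : V) from rfl, huuv, huuv]
          linarith
        · right
          rw [show a = ((⟨a, ha'⟩ : (↑W : Set V)) : V) from rfl,
            show b = ((⟨b, hb'⟩ : (↑W : Set V)) : V) from rfl, hwwv, hwwv]
          linarith
      have hboth : ∀ a ∈ W, ∀ b ∈ W, uu a = uu b → ww a = ww b → a = b := by
        intro a ha b hb h1 h2
        have ha' : a ∈ (↑W : Set V) := by simpa using ha
        have hb' : b ∈ (↑W : Set V) := by simpa using hb
        rw [show a = ((⟨a, ha'⟩ : (↑W : Set V)) : V) from rfl,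
          show b = ((⟨b, hb'⟩ : (↑W : Set V)) : V) from rfl, huuv, huuv] at h1
        rw [show a = ((⟨a, ha'⟩ : (↑W : Set V)) : V) from rfl,
          show b = ((⟨b, hb'⟩ : (↑W : Set V)) : V) from rfl, hwwv, hwwv] at h2
        have hgab : g ⟨a, ha'⟩ = g ⟨b, hb'⟩ := by linarith
        exact congrArg Subtype.val (hg hgab)
      have hncu : ∃ z1 ∈ W, ∃ z2 ∈ W, uu z1 ≠ uu z2 := by
        refine ⟨↑x, by simpa using x.2, ↑y, by simpa using y.2, fun h => hxy ?_⟩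
        rw [huuv x, huuv y] at h
        have he : f x - f y = g x - g y := by linarith
        rw [he]
      have hncw : ∃ z1 ∈ W, ∃ z2 ∈ W, ww z1 ≠ ww z2 := by
        refine ⟨↑x, by simpa using x.2, ↑y, by simpa using y.2, fun h => hxy ?_⟩
        rw [hwwv x, hwwv y] at h
        have he : f x - f y = -(g x - g y) := by linarith
        rw [he, abs_neg]
      have hfiberlt : ∀ (hh : V → ℝ), (∃ z1 ∈ W, ∃ z2 ∈ W, hh z1 ≠ hh z2) →
          ∀ a, (W.filter fun z => hh z = a).card ≤ k := by
        intro hh hnc a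
        obtain ⟨z1, hz1, z2, hz2, hz⟩ := hnc
        have hex : ∃ z ∈ W, z ∉ (W.filter fun z => hh z = a) := by
          rcases eq_or_ne (hh z1) a with h | h
          · exact ⟨z2, hz2, fun hmem => hz (h.trans (Finset.mem_filter.mp hmem).2.symm)⟩
          · exact ⟨z1, hz1, fun hmem => h (Finset.mem_filter.mp hmem).2⟩
        have hss : (W.filter fun z => hh z = a) ⊂ W :=
          (Finset.ssubset_iff_of_subset (Finset.filter_subset _ _)).mpr hex
        have := Finset.card_lt_card hss
        omega
      have hDsplit := Dcount_split G W uu ww hedge hboth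
      have hsubU : ∀ (S : Finset V), S ⊆ W → ∀ U : Finset V, U ⊆ S →
          GloballyRigid (SimpleGraph.induce (↑U : Set V) G) → (U.card : ℝ) ≤ s :=
        fun S hS U hUS hUr => hU U (hUS.trans hS) hUr
      have hrowb : ∀ a ∈ W.image uu,
          (Dcount G (W.filter fun z => uu z = a) : ℝ) * Real.log 2
          ≤ s * ((W.filter fun z => uu z = a).card : ℝ)
            * Real.log ((W.filter fun z => uu z = a).card) :=
        fun a _ => ih _ (hfiberlt uu hncu a) (hsubU _ (Finset.filter_subset _ _))
      have hcolb : ∀ b ∈ W.image ww,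
          (Dcount G (W.filter fun z => ww z = b) : ℝ) * Real.log 2
          ≤ s * ((W.filter fun z => ww z = b).card : ℝ)
            * Real.log ((W.filter fun z => ww z = b).card) :=
        fun b _ => ih _ (hfiberlt ww hncw b) (hsubU _ (Finset.filter_subset _ _))
      have hcast : (Dcount G W : ℝ)
          = (∑ a ∈ W.image uu, (Dcount G (W.filter fun z => uu z = a) : ℝ))
            + (∑ b ∈ W.image ww, (Dcount G (W.filter fun z => ww z = b) : ℝ)) := by
        rw [hDsplit]; push_cast; ring
      calc (Dcount G W : ℝ) * Real.log 2
          = (∑ a ∈ W.image uu, (Dcount G (W.filter fun z => uu z = a) : ℝ) * Real.log 2)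
            + (∑ b ∈ W.image ww, (Dcount G (W.filter fun z => ww z = b) : ℝ) * Real.log 2) := by
            rw [hcast, add_mul, Finset.sum_mul, Finset.sum_mul]
        _ ≤ (∑ a ∈ W.image uu, s * ((W.filter fun z => uu z = a).card : ℝ)
              * Real.log ((W.filter fun z => uu z = a).card))
            + (∑ b ∈ W.image ww, s * ((W.filter fun z => ww z = b).card : ℝ)
              * Real.log ((W.filter fun z => ww z = b).card)) :=
            add_le_add (Finset.sum_le_sum hrowb) (Finset.sum_le_sum hcolb)
        _ = s * ((∑ a ∈ W.image uu, ((W.filter fun z => uu z = a).card : ℝ)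
              * Real.log ((W.filter fun z => uu z = a).card))
            + (∑ b ∈ W.image ww, ((W.filter fun z => ww z = b).card : ℝ)
              * Real.log ((W.filter fun z => ww z = b).card))) := by
            rw [mul_add, Finset.mul_sum, Finset.mul_sum]
            congr 1 <;> exact Finset.sum_congr rfl fun _ _ => by ring
        _ = s * (∑ v ∈ W, (Real.log ((W.filter fun z => uu z = uu v).card)
              + Real.log ((W.filter fun z => ww z = ww v).card))) := by
            rw [image_fiber_sum W uu, image_fiber_sum W ww, Finset.sum_add_distrib]
        _ ≤ s * ((W.card : ℝ) * Real.log W.card) :=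
            mul_le_mul_of_nonneg_left (entropy_sum_le W uu ww hboth) hs
        _ = s * W.card * Real.log W.card := by ring

/-- The empty induced subgraph is globally rigid. -/
lemma rigid_empty {V : Type*} (G : SimpleGraph V) :
    GloballyRigid (SimpleGraph.induce (↑(∅ : Finset V) : Set V) G) := by
  intro f g _ _ _ x y
  exact absurd x.2 (by simp)

/-- Every graph on `n ≥ 2` vertices with `m` edges contains a set `U` of at least
`(2 log 2) · m / (n log n)` vertices inducing a globally rigid subgraph of ℝ. -/
theorem stmt1 {V : Type*} [Fintype V] [DecidableEq V] (G : SimpleGraph V)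
    (n m : ℕ) (hn : Fintype.card V = n) (hn2 : 2 ≤ n) (hm : Nat.card G.edgeSet = m) :
    ∃ U : Finset V,
      (2 * Real.log 2) * m / (n * Real.log n) ≤ (U.card : ℝ) ∧
      GloballyRigid (SimpleGraph.induce (↑U : Set V) G) := by
  classical
  subst hn
  subst hm
  set S : Finset (Finset V) :=
    Finset.univ.filter (fun U : Finset V => GloballyRigid (SimpleGraph.induce (↑U : Set V) G))
    with hSdef
  have hSne : S.Nonempty := ⟨∅, Finset.mem_filter.mpr ⟨Finset.mem_univ _, rigid_empty G⟩⟩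
  obtain ⟨U₀, hU₀S, hmax⟩ := Finset.exists_max_image S Finset.card hSne
  have hU₀rig : GloballyRigid (SimpleGraph.induce (↑U₀ : Set V) G) :=
    (Finset.mem_filter.mp hU₀S).2
  refine ⟨U₀, ?_, hU₀rig⟩
  have hmain := main_count G (U₀.card : ℝ) (by positivity) (Fintype.card V) Finset.univ
    (le_of_eq (Finset.card_univ))
    (fun U _ hUrig => by
      exact_mod_cast hmax U (Finset.mem_filter.mpr ⟨Finset.mem_univ _, hUrig⟩))
  rw [Finset.card_univ] at hmain
  -- Dcount over univ equals twice the number of edges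
  have hDm : Dcount G Finset.univ = 2 * Nat.card G.edgeSet := by
    have h1 : 2 * G.edgeFinset.card
        = (Finset.univ.filter fun (x, y) => G.Adj x y).card := by
      convert SimpleGraph.two_mul_card_edgeFinset (G := G) using 3
    have h2 : ((Finset.univ ×ˢ Finset.univ).filter fun p : V × V => G.Adj p.1 p.2)
        = (Finset.univ.filter fun (x, y) => G.Adj x y) := by
      ext ⟨a, b⟩
      simp
    have h3 : G.edgeFinset.card = Nat.card G.edgeSet := by
      rw [SimpleGraph.edgeFinset_card, Nat.card_eq_fintype_card]
    rw [Dcount, h2, ← h1, h3]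
  rw [hDm] at hmain
  -- final arithmetic
  have hn1 : (1:ℝ) < (Fintype.card V : ℝ) := by exact_mod_cast hn2.trans_lt' (by norm_num)
  have hlogn : (0:ℝ) < Real.log (Fintype.card V) := Real.log_pos hn1
  have hnpos : (0:ℝ) < (Fintype.card V : ℝ) := by linarith
  rw [div_le_iff₀ (by positivity)]
  push_cast at hmain ⊢
  nlinarith [hmain]
end

section
/- For every positive integer N there exist an injective function f : Fin (2^N) → ℝ and a simple graph G on vertex set Fin (2^N) with exactly N·2^{N−1} edges such that every subset of Fin (2^N) that is reconstructible from G with respect to f has size at most 2. -/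
/-!
Place vertex `x` of the `N`-cube at the integer whose base-`3` digits are the binary digits of
`x`; an edge flipping bit `m` then has length `3 ^ m`. The reflection `x ↦ x ^^^ 2 ^ k` of the
cube preserves every edge length, and if `u` and `v` differ in bit `k` it changes `f u - f v` by
`±2 * 3 ^ k`, so it preserves `|f u - f v|` only when `v = u ^^^ 2 ^ k`. Hence any two points of a
reconstructible set are adjacent in the cube, which has no triangles.
-/

/-- The distance between `u` and `v` is reconstructible from `G` w.r.t. `f`. -/
def distRecon {n : ℕ} (f : Fin n → ℝ) (G : SimpleGraph (Fin n)) (u v : Fin n) : Prop :=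
  ∀ g : Fin n → ℝ, Function.Injective g →
    (∀ i j, G.Adj i j → |g i - g j| = |f i - f j|) → |g u - g v| = |f u - f v|

/-- A subset `V'` is reconstructible from `G` w.r.t. `f`. -/
def setRecon {n : ℕ} (f : Fin n → ℝ) (G : SimpleGraph (Fin n)) (V' : Finset (Fin n)) : Prop :=
  ∀ u ∈ V', ∀ v ∈ V', distRecon f G u v

open Finset

theorem SimpleGraph.CliqueFree.card_le_of_isClique {α : Type*} {G : SimpleGraph α} {n : ℕ}
    {s : Finset α} (hG : G.CliqueFree (n + 1)) (hs : G.IsClique (s : Set α)) : #s ≤ n := by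
  by_contra! h
  obtain ⟨t, hts, ht⟩ := exists_subset_card_eq h
  exact hG t ⟨hs.subset (by exact_mod_cast hts), ht⟩

theorem Nat.two_pow_xor_two_pow_ne_two_pow (i j l : ℕ) : 2 ^ i ^^^ 2 ^ j ≠ 2 ^ l := by
  intro h
  have hbit : ∀ n, (decide (i = n) ^^ decide (j = n)) = decide (l = n) := fun n => by
    simpa [Nat.testBit_xor, Nat.testBit_two_pow] using congrArg (Nat.testBit · n) h
  have hl := hbit l
  have hi := hbit i
  have hj := hbit j
  by_cases hij : i = j <;> simp_all

def binaryAsTernary (n : ℕ) : ℕ := Nat.ofDigits 3 (Nat.digits 2 n)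

theorem digits_three_binaryAsTernary (n : ℕ) : Nat.digits 3 (binaryAsTernary n) = Nat.digits 2 n :=
  Nat.digits_ofDigits 3 (by norm_num) _
    (fun d hd => (Nat.digits_lt_base one_lt_two hd).trans (by norm_num))
    (fun h => Nat.getLast_digit_ne_zero 2 (by rintro rfl; simp at h))

theorem binaryAsTernary_injective : Function.Injective binaryAsTernary := fun a b h =>
  Nat.digits_inj_iff.1 <| by rw [← digits_three_binaryAsTernary, h, digits_three_binaryAsTernary]

theorem binaryAsTernary_eq (n : ℕ) : binaryAsTernary n = n % 2 + 3 * binaryAsTernary (n / 2) := by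
  rcases Nat.eq_zero_or_pos n with rfl | hn
  · rfl
  · rw [binaryAsTernary, Nat.digits_def' one_lt_two hn, Nat.ofDigits_cons, binaryAsTernary]

theorem binaryAsTernary_xor_two_pow {x k : ℕ} (hx : x.testBit k = false) :
    binaryAsTernary (x ^^^ 2 ^ k) = binaryAsTernary x + 3 ^ k := by
  induction k generalizing x with
  | zero =>
    have hx2 : x % 2 = 0 := by simpa [Nat.testBit_zero] using hx
    rw [binaryAsTernary_eq, binaryAsTernary_eq x, Nat.xor_mod_two_eq, Nat.xor_div_two]
    simp only [pow_zero, Nat.reduceDiv, xor_zero, hx2, zero_add]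
    omega
  | succ k ih =>
    rw [Nat.testBit_add_one] at hx
    rw [binaryAsTernary_eq, binaryAsTernary_eq x, Nat.xor_mod_two_eq, Nat.xor_div_two,
      pow_succ, Nat.mul_div_cancel _ two_pos, ih hx]
    simp only [Nat.add_mod, Nat.mul_mod_left, add_zero, dvd_refl, Nat.mod_mod_of_dvd]
    ring

theorem binaryAsTernary_of_xor_eq_two_pow {x y k : ℕ} (hx : x.testBit k = false)
    (h : x ^^^ y = 2 ^ k) : binaryAsTernary y = binaryAsTernary x + 3 ^ k := by
  rw [← binaryAsTernary_xor_two_pow hx, ← h, ← Nat.xor_assoc, Nat.xor_self, Nat.zero_xor]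

theorem abs_binaryAsTernary_sub_of_xor_eq_two_pow {x y k : ℕ} (h : x ^^^ y = 2 ^ k) :
    |(binaryAsTernary x : ℝ) - binaryAsTernary y| = 3 ^ k := by
  cases hx : x.testBit k
  · rw [binaryAsTernary_of_xor_eq_two_pow hx h, abs_sub_comm]
    push_cast
    simp
  · have hy : y.testBit k = false := by
      simpa [Nat.testBit_xor, Nat.testBit_two_pow, hx] using congrArg (Nat.testBit · k) h
    rw [binaryAsTernary_of_xor_eq_two_pow hy (by rwa [Nat.xor_comm])]
    push_cast
    simp

theorem abs_binaryAsTernary_xor_sub_of_isPowerOfTwo {x y : ℕ} (k : ℕ)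
    (h : (x ^^^ y).isPowerOfTwo) :
    |(binaryAsTernary (x ^^^ 2 ^ k) : ℝ) - binaryAsTernary (y ^^^ 2 ^ k)| =
      |(binaryAsTernary x : ℝ) - binaryAsTernary y| := by
  obtain ⟨m, hm⟩ := h
  have hm' : (x ^^^ 2 ^ k) ^^^ (y ^^^ 2 ^ k) = 2 ^ m := by
    rw [← hm, Nat.xor_comm y, ← Nat.xor_assoc, Nat.xor_assoc x, Nat.xor_self, Nat.xor_zero]
  rw [abs_binaryAsTernary_sub_of_xor_eq_two_pow hm', abs_binaryAsTernary_sub_of_xor_eq_two_pow hm]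

theorem xor_eq_two_pow_of_abs_binaryAsTernary_xor_sub {a b k : ℕ} (ha : a.testBit k = false)
    (hb : b.testBit k = true)
    (h : |(binaryAsTernary (a ^^^ 2 ^ k) : ℝ) - binaryAsTernary (b ^^^ 2 ^ k)| =
      |(binaryAsTernary a : ℝ) - binaryAsTernary b|) : a ^^^ b = 2 ^ k := by
  have hb' : (b ^^^ 2 ^ k).testBit k = false := by simp [Nat.testBit_xor, hb]
  have hb'' : binaryAsTernary b = binaryAsTernary (b ^^^ 2 ^ k) + 3 ^ k := by
    rw [← binaryAsTernary_xor_two_pow hb', Nat.xor_assoc, Nat.xor_self, Nat.xor_zero]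
  rw [binaryAsTernary_xor_two_pow ha, hb''] at h
  push_cast at h
  have h3 : (0 : ℝ) < 3 ^ k := by positivity
  have hab : binaryAsTernary a = binaryAsTernary (b ^^^ 2 ^ k) := by
    rcases abs_eq_abs.1 h with h | h
    · linarith
    · exact_mod_cast (by linarith : (binaryAsTernary a : ℝ) = binaryAsTernary (b ^^^ 2 ^ k))
  rw [binaryAsTernary_injective hab, Nat.xor_comm, ← Nat.xor_assoc, Nat.xor_self, Nat.zero_xor]

def bitFlipGraph (n : ℕ) : SimpleGraph (Fin n) where
  Adj i j := (i.val ^^^ j.val).isPowerOfTwo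
  symm := ⟨fun i j => by rw [Nat.xor_comm]; exact id⟩
  loopless := ⟨fun i ⟨k, h⟩ => by rw [Nat.xor_self] at h; exact (Nat.two_pow_pos k).ne h⟩

instance (n : ℕ) : DecidableRel (bitFlipGraph n).Adj := fun i j =>
  inferInstanceAs (Decidable (i.val ^^^ j.val).isPowerOfTwo)

theorem bitFlipGraph_cliqueFree_three (n : ℕ) : (bitFlipGraph n).CliqueFree 3 := by
  rintro s hs
  obtain ⟨a, b, c, ⟨i, hab⟩, ⟨j, hac⟩, ⟨l, hbc⟩, -⟩ := SimpleGraph.is3Clique_iff.1 hs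
  refine Nat.two_pow_xor_two_pow_ne_two_pow i j l ?_
  rw [← hab, ← hac, ← hbc, Nat.xor_comm a.val, Nat.xor_assoc, ← Nat.xor_assoc a.val,
    Nat.xor_self, Nat.zero_xor]

theorem bitFlipGraph_degree (N : ℕ) (x : Fin (2 ^ N)) : (bitFlipGraph (2 ^ N)).degree x = N := by
  rw [← SimpleGraph.card_neighborFinset_eq_degree]
  refine (card_bij' (s := range N)
    (fun k hk => ⟨x.val ^^^ 2 ^ k,
      Nat.xor_lt_two_pow x.isLt (Nat.pow_lt_pow_right one_lt_two (mem_range.1 hk))⟩)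
    (fun y _ => Nat.log 2 (x.val ^^^ y.val)) ?_ ?_ ?_ ?_).symm.trans (card_range N)
  · intro k _
    exact (SimpleGraph.mem_neighborFinset _ _ _).2 ⟨k, xor_cancel_left _ _⟩
  · intro y hy
    obtain ⟨k, hk⟩ := (SimpleGraph.mem_neighborFinset _ _ _).1 hy
    have hlt : 2 ^ k < 2 ^ N := hk ▸ Nat.xor_lt_two_pow x.isLt y.isLt
    simpa [hk] using (Nat.pow_lt_pow_iff_right (by norm_num)).1 hlt
  · intro k _
    simp [xor_cancel_left]
  · intro y hy
    obtain ⟨k, hk⟩ := (SimpleGraph.mem_neighborFinset _ _ _).1 hy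
    ext
    change x.val ^^^ 2 ^ Nat.log 2 (x.val ^^^ y.val) = y.val
    rw [hk, Nat.log_pow one_lt_two, ← hk, xor_cancel_left]

theorem card_edgeSet_bitFlipGraph (N : ℕ) :
    Nat.card (bitFlipGraph (2 ^ N)).edgeSet = N * 2 ^ (N - 1) := by
  have h := (bitFlipGraph (2 ^ N)).sum_degrees_eq_twice_card_edges
  simp only [bitFlipGraph_degree, sum_const, card_univ, Fintype.card_fin, smul_eq_mul] at h
  rw [Nat.card_eq_fintype_card, ← SimpleGraph.edgeFinset_card]
  generalize #(bitFlipGraph (2 ^ N)).edgeFinset = E at h ⊢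
  cases N with
  | zero => simpa using h
  | succ N => rw [pow_succ] at h; simp only [add_tsub_cancel_right]; linarith

theorem adj_of_distRecon {n : ℕ} {u v : Fin n} (huv : u ≠ v)
    (h : distRecon (fun i => (binaryAsTernary i : ℝ)) (bitFlipGraph n) u v) :
    (bitFlipGraph n).Adj u v := by
  obtain ⟨k, hk⟩ := Nat.exists_testBit_of_ne_zero (Nat.xor_ne_zero_iff.2 (Fin.val_ne_of_ne huv))
  have hreflect := h (fun i => binaryAsTernary (i.val ^^^ 2 ^ k))
    ((Nat.cast_injective.comp binaryAsTernary_injective).comp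
      ((Nat.xor_left_injective).comp Fin.val_injective))
    (fun i j hij => abs_binaryAsTernary_xor_sub_of_isPowerOfTwo k hij)
  rw [Nat.testBit_xor] at hk
  cases hu : u.val.testBit k
  · exact ⟨k, xor_eq_two_pow_of_abs_binaryAsTernary_xor_sub hu (by simpa [hu] using hk) hreflect⟩
  · refine ⟨k, Nat.xor_comm u.val v.val ▸ xor_eq_two_pow_of_abs_binaryAsTernary_xor_sub
      (by simpa [hu] using hk) hu ?_⟩
    rwa [abs_sub_comm, abs_sub_comm (binaryAsTernary v.val : ℝ)]

theorem isClique_of_setRecon {n : ℕ} {V' : Finset (Fin n)}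
    (h : setRecon (fun i => (binaryAsTernary i : ℝ)) (bitFlipGraph n) V') :
    (bitFlipGraph n).IsClique (V' : Set (Fin n)) :=
  fun u hu v hv huv => adj_of_distRecon huv (h u hu v hv)

theorem stmt3_general (N : ℕ) :
    ∃ (f : Fin (2 ^ N) → ℝ) (G : SimpleGraph (Fin (2 ^ N))),
      Function.Injective f ∧
      Nat.card G.edgeSet = N * 2 ^ (N - 1) ∧
      ∀ V' : Finset (Fin (2 ^ N)), setRecon f G V' → V'.card ≤ 2 :=
  ⟨fun i => binaryAsTernary i, bitFlipGraph (2 ^ N),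
    (Nat.cast_injective.comp binaryAsTernary_injective).comp Fin.val_injective,
    card_edgeSet_bitFlipGraph N,
    fun _ hV' => (bitFlipGraph_cliqueFree_three _).card_le_of_isClique (isClique_of_setRecon hV')⟩

/-- For every positive `N` there are an injective `f : Fin 2^N → ℝ` and a graph `G` on
`Fin 2^N` with exactly `N·2^{N-1}` edges such that every reconstructible subset has size at
most `2`. -/
theorem stmt3 (N : ℕ) (hN : 0 < N) :
    ∃ (f : Fin (2 ^ N) → ℝ) (G : SimpleGraph (Fin (2 ^ N))),
      Function.Injective f ∧
      Nat.card G.edgeSet = N * 2 ^ (N - 1) ∧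
      ∀ V' : Finset (Fin (2 ^ N)), setRecon f G V' → V'.card ≤ 2 :=
  stmt3_general N
end

section
/- Let f : Fin n → ℝ be an injective function, let G be a connected simple graph on vertex set Fin n, and let u, v be two vertices of G. Suppose that the distance between u and v is not reconstructible from G with respect to f. Then there exists a connected partition S_1, …, S_k of Fin n which is a witness with respect to G and f, and such that u ∈ S_1 and v ∈ S_2. -/
/-- `P` is a connected partition of the vertex set of `G` (blocks are the fibers of `P`). -/
def ConnPartition {V : Type*} (G : SimpleGraph V) {k : ℕ} (P : V → Fin k) : Prop :=
  Function.Surjective P ∧ ∀ i : Fin k, (SimpleGraph.induce (P ⁻¹' {i}) G).Connected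

/-- The set of edges of `G` whose endpoints lie in two different blocks of `P`. -/
def crossSet {V : Type*} (G : SimpleGraph V) {k : ℕ} (P : V → Fin k) : Set (Sym2 V) :=
  {e | e ∈ G.edgeSet ∧ ¬ (e.map P).IsDiag}

/-- The connected partition `P` is a witness with respect to `G` and the embedding `g`:
there are reals `F i j` with `F l l = 0` such that (i) at most half of the edges of `G` cross
between two different blocks, (ii) every crossing edge `a b` with `a` in block `i` and `b` in
block `j` has `g a - g b = F i j`, and (iii) around every closed walk the values of `F` along
consecutive blocks sum to `0`. -/
def IsWitness {V : Type*} (G : SimpleGraph V) (g : V → ℝ) {k : ℕ} (P : V → Fin k) : Prop :=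
  ∃ F : Fin k → Fin k → ℝ, (∀ l, F l l = 0) ∧
    ((Nat.card (crossSet G P) : ℝ) ≤ (Nat.card G.edgeSet : ℝ) / 2) ∧
    (∀ a b, G.Adj a b → P a ≠ P b → g a - g b = F (P a) (P b)) ∧
    (∀ (u : V) (w : G.Walk u u),
      (w.darts.map (fun d => F (P d.fst) (P d.snd))).sum = 0)

/-!
Let `g` realise the edge lengths of `G` but not the distance `uv`. Every edge `ab` satisfies
`f a - f b = g a - g b` or `f a - f b = -(g a - g b)`, so replacing `g` by `-g` if necessary we may
assume the first alternative holds on at least half of the edges. Along those edges `φ = f - g` is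
constant; the blocks are the connected components of the subgraph they span, and `φ u ≠ φ v` puts
`u` and `v` in different blocks. On every other edge `2 (f a - f b) = φ a - φ b`, so
`F i j = (φ_i - φ_j) / 2` (with `φ_i` the value of `φ` on block `i`) telescopes around closed walks.
-/

theorem Set.two_mul_ncard_le_or_of_disjoint {α : Type*} {s t u : Set α} (hu : u.Finite)
    (hs : s ⊆ u) (ht : t ⊆ u) (hst : Disjoint s t) :
    2 * s.ncard ≤ u.ncard ∨ 2 * t.ncard ≤ u.ncard := by
  have hunion := Set.ncard_union_eq hst (hu.subset hs) (hu.subset ht)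
  have hle := Set.ncard_le_ncard (Set.union_subset hs ht) hu
  omega

theorem Fintype.exists_equiv_fin_eq_zero_one {α : Type*} [Fintype α] {a b : α} (hab : a ≠ b) :
    ∃ (k : ℕ) (hk : 2 ≤ k) (e : α ≃ Fin k),
      e a = ⟨0, zero_lt_two.trans_le hk⟩ ∧ e b = ⟨1, one_lt_two.trans_le hk⟩ := by
  have hk : 2 ≤ Fintype.card α := Fintype.one_lt_card_iff_nontrivial.mpr ⟨a, b, hab⟩
  let e₀ := (Fintype.equivFin α).trans (Equiv.swap (Fintype.equivFin α a) ⟨0, by omega⟩)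
  have he₀a : e₀ a = ⟨0, by omega⟩ := by simp [e₀]
  have he₀b : e₀ b ≠ ⟨0, by omega⟩ := he₀a ▸ e₀.injective.ne hab.symm
  refine ⟨_, hk, e₀.trans (Equiv.swap (e₀ b) ⟨1, by omega⟩), ?_, by simp⟩
  rw [Equiv.trans_apply, he₀a, Equiv.swap_apply_of_ne_of_ne he₀b.symm (by simp [Fin.ext_iff])]

namespace SimpleGraph

variable {V : Type*} {G : SimpleGraph V}

theorem Walk.sum_darts_sub {β : Type*} [AddCommGroup β] (φ : V → β) {a b : V} (w : G.Walk a b) :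
    (w.darts.map fun d => φ d.fst - φ d.snd).sum = φ a - φ b := by
  induction w with
  | nil => simp
  | cons _ _ ih => simp [ih]

def levelGraph (G : SimpleGraph V) {α : Type*} (φ : V → α) : SimpleGraph V where
  Adj a b := G.Adj a b ∧ φ a = φ b
  symm := ⟨fun _ _ h => ⟨h.1.symm, h.2.symm⟩⟩
  loopless := ⟨fun _ h => G.loopless.irrefl _ h.1⟩

section levelGraph

variable {α : Type*} {φ : V → α}

@[simp]
theorem levelGraph_adj {a b : V} : (G.levelGraph φ).Adj a b ↔ G.Adj a b ∧ φ a = φ b :=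
  Iff.rfl

theorem levelGraph_le : G.levelGraph φ ≤ G := fun _ _ h => h.1

theorem Reachable.eq_of_levelGraph {a b : V} (h : (G.levelGraph φ).Reachable a b) :
    φ a = φ b := by
  obtain ⟨w⟩ := h
  induction w with
  | nil => rfl
  | cons hadj _ ih => exact hadj.2.trans ih

end levelGraph

theorem connPartition_comp_connectedComponentMk {H : SimpleGraph V} (hHG : H ≤ G) {k : ℕ}
    (e : H.ConnectedComponent ≃ Fin k) : ConnPartition G (e ∘ H.connectedComponentMk) := by
  refine ⟨e.surjective.comp Quot.mk_surjective, fun i => ?_⟩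
  have hfiber : e ∘ H.connectedComponentMk ⁻¹' {i} = (e.symm i).supp := by
    ext x
    simp [Equiv.eq_symm_apply]
  rw [hfiber]
  exact (e.symm i).maximal_connected_induce_supp.prop.mono (comap_monotone _ hHG)

theorem crossSet_subset_edgeSet_diff {H : SimpleGraph V} {k : ℕ} {P : V → Fin k}
    (hP : ∀ a b, H.Adj a b → P a = P b) : crossSet G P ⊆ G.edgeSet \ H.edgeSet := by
  rintro e ⟨he, hcross⟩
  refine ⟨he, fun heH => hcross ?_⟩
  induction e using Sym2.ind with
  | _ a b => simpa using hP a b heH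

theorem isWitness_of_potential {f : V → ℝ} {k : ℕ} {P : V → Fin k} (c : Fin k → ℝ)
    (hc : ∀ a b, G.Adj a b → P a ≠ P b → f a - f b = c (P a) - c (P b))
    (hhalf : 2 * Nat.card (crossSet G P) ≤ Nat.card G.edgeSet) : IsWitness G f P := by
  refine ⟨fun i j => c i - c j, fun _ => sub_self _, ?_, hc, fun u w => ?_⟩
  · rw [le_div_iff₀ two_pos, mul_comm]
    exact_mod_cast hhalf
  · exact (w.sum_darts_sub (c ∘ P)).trans (sub_self _)

end SimpleGraph

open SimpleGraph

theorem exists_connPartition_isWitness_of_level {V : Type*} [Finite V] (G : SimpleGraph V)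
    (f φ : V → ℝ) (hcross : ∀ a b, G.Adj a b → φ a ≠ φ b → 2 * (f a - f b) = φ a - φ b)
    (hhalf : 2 * (G.edgeSet \ (G.levelGraph φ).edgeSet).ncard ≤ G.edgeSet.ncard)
    {u v : V} (huv : φ u ≠ φ v) :
    ∃ (k : ℕ) (hk : 2 ≤ k) (P : V → Fin k),
      ConnPartition G P ∧ IsWitness G f P ∧
      P u = ⟨0, zero_lt_two.trans_le hk⟩ ∧ P v = ⟨1, one_lt_two.trans_le hk⟩ := by
  set H := G.levelGraph φ
  have : Fintype H.ConnectedComponent := Fintype.ofFinite _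
  let φH : H.ConnectedComponent → ℝ :=
    ConnectedComponent.lift φ fun _ _ w _ => w.reachable.eq_of_levelGraph
  have hmk : H.connectedComponentMk u ≠ H.connectedComponentMk v :=
    fun h => huv (ConnectedComponent.exact h).eq_of_levelGraph
  obtain ⟨k, hk, e, heu, hev⟩ := Fintype.exists_equiv_fin_eq_zero_one hmk
  set P := e ∘ H.connectedComponentMk
  have hP : ∀ a b, H.Adj a b → P a = P b :=
    fun a b h => congrArg e (ConnectedComponent.sound h.reachable)
  have hPφ : ∀ x, φH (e.symm (P x)) = φ x := fun x => by simp [P, φH]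
  refine ⟨k, hk, P, connPartition_comp_connectedComponentMk levelGraph_le e,
    isWitness_of_potential (fun i => φH (e.symm i) / 2) (fun a b hab hPab => ?_) ?_, heu, hev⟩
  · have hφ : φ a ≠ φ b := fun h => hPab (hP a b ⟨hab, h⟩)
    simp only [hPφ]
    linarith [hcross a b hab hφ]
  · rw [Nat.card_coe_set_eq, Nat.card_coe_set_eq]
    exact (Nat.mul_le_mul_left 2 (Set.ncard_le_ncard (crossSet_subset_edgeSet_diff hP))).trans
      hhalf

theorem exists_connPartition_isWitness_of_abs_eq {V : Type*} [Finite V] (G : SimpleGraph V)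
    (f g : V → ℝ) (hg : ∀ a b, G.Adj a b → |g a - g b| = |f a - f b|) {u v : V}
    (hne : |g u - g v| ≠ |f u - f v|)
    (hhalf : 2 * (G.edgeSet \ (G.levelGraph (f - g)).edgeSet).ncard ≤ G.edgeSet.ncard) :
    ∃ (k : ℕ) (hk : 2 ≤ k) (P : V → Fin k),
      ConnPartition G P ∧ IsWitness G f P ∧
      P u = ⟨0, zero_lt_two.trans_le hk⟩ ∧ P v = ⟨1, one_lt_two.trans_le hk⟩ := by
  refine exists_connPartition_isWitness_of_level G f (f - g) (fun a b hab hφ => ?_) hhalf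
    fun h => hne ?_
  · rcases abs_eq_abs.mp (hg a b hab) with h | h
    · exact (hφ (by simp only [Pi.sub_apply]; linarith)).elim
    · simp only [Pi.sub_apply]; linarith
  · simp only [Pi.sub_apply] at h
    rw [show g u - g v = f u - f v by linarith]

theorem disjoint_edgeSet_diff_levelGraph {V : Type*} (G : SimpleGraph V) (f g : V → ℝ)
    (hg : ∀ a b, G.Adj a b → |g a - g b| = |f a - f b|) :
    Disjoint (G.edgeSet \ (G.levelGraph (f - g)).edgeSet)
      (G.edgeSet \ (G.levelGraph (f - -g)).edgeSet) := by
  rw [Set.disjoint_left]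
  rintro e ⟨he, hminus⟩ ⟨-, hplus⟩
  induction e using Sym2.ind with
  | _ a b =>
    simp only [mem_edgeSet, levelGraph_adj, Pi.sub_apply, Pi.neg_apply, not_and] at he hminus hplus
    rcases abs_eq_abs.mp (hg a b he) with h | h
    · exact hminus he (by linarith)
    · exact hplus he (by linarith)

/-- If the distance `uv` is not reconstructible from a connected graph `G`, then there is a
connected partition of the vertex set which is a witness w.r.t. `G` and `f`, with `u` in the
first block and `v` in the second. -/
theorem stmt4 {n : ℕ} (f : Fin n → ℝ)
    (G : SimpleGraph (Fin n)) (u v : Fin n)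
    (h : ¬ distRecon f G u v) :
    ∃ (k : ℕ) (hk : 2 ≤ k) (P : Fin n → Fin k),
      ConnPartition G P ∧ IsWitness G f P ∧
      P u = ⟨0, by omega⟩ ∧ P v = ⟨1, by omega⟩ := by
  obtain ⟨g, -, hg, hne⟩ : ∃ g : Fin n → ℝ, Function.Injective g ∧
      (∀ i j, G.Adj i j → |g i - g j| = |f i - f j|) ∧ |g u - g v| ≠ |f u - f v| := by
    simpa [distRecon] using h
  have hneg_sub : ∀ a b, |(-g) a - (-g) b| = |g a - g b| := fun a b => by
    rw [Pi.neg_apply, Pi.neg_apply, neg_sub_neg, abs_sub_comm]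
  rcases Set.two_mul_ncard_le_or_of_disjoint G.edgeSet.toFinite Set.sdiff_subset Set.sdiff_subset
      (disjoint_edgeSet_diff_levelGraph G f g hg) with hhalf | hhalf
  · exact exists_connPartition_isWitness_of_abs_eq G f g hg hne hhalf
  · exact exists_connPartition_isWitness_of_abs_eq G f (-g)
      (fun a b hab => (hneg_sub a b).trans (hg a b hab)) ((hneg_sub u v).trans_ne hne) hhalf
end

section
/- Let f : Fin n → ℝ be an injective function, let ℓ ≤ n/2, let G be a connected simple graph on vertex set Fin ℓ (regarded as the first ℓ elements of Fin n), and let S_1, …, S_k be a connected partition of Fin ℓ. Let E′ be the set of edges of G with endpoints in two different blocks S_i, let V′ be the number of vertices incident to at least one edge of E′, and let C_2 be the number of connected components with more than one vertex of the subgraph spanned by E′. Then, for a permutation σ of Fin n chosen uniformly at random, the probability q that S_1, …, S_k is a witness with respect to G and f ∘ σ satisfies q ≤ (n/2)^{−(V′ − C_2 − (k−1))} (with the right-hand side interpreted as a real power). -/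
/-- The subgraph spanned by the cross edges of `P`. -/
def spannedGraph {V : Type*} (G : SimpleGraph V) {k : ℕ} (P : V → Fin k) : SimpleGraph V :=
  SimpleGraph.fromEdgeSet (crossSet G P)

/-- `V'`: the number of vertices incident to at least one cross edge. -/
noncomputable def Vprime {V : Type*} (G : SimpleGraph V) {k : ℕ} (P : V → Fin k) : ℕ :=
  Nat.card {v : V // ∃ e ∈ crossSet G P, v ∈ e}

/-- `C₂`: the number of connected components with more than one vertex of the subgraph
spanned by the cross edges. -/
noncomputable def C2count {V : Type*} (G : SimpleGraph V) {k : ℕ} (P : V → Fin k) : ℕ :=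
  Nat.card {c : (spannedGraph G P).ConnectedComponent //
    ∃ v w : V, v ≠ w ∧ (spannedGraph G P).connectedComponentMk v = c ∧
      (spannedGraph G P).connectedComponentMk w = c}

/-!
If `P` is a witness for `g`, the cycle condition makes `F` a coboundary, which yields a potential
`φ` on the blocks with `g a + φ (P a) = g b + φ (P b)` along every cross edge. So `g` restricted
to the `V'` cross vertices lies in the image of a linear map from a space of dimension `k + C₂`
whose kernel contains the constants, and is therefore determined by its values outside a set `D`
of at least `V' - C₂ - (k - 1)` cross vertices. A witnessing `σ` is thus determined by its values
on `Fin ℓ \ D` and on a set of `n - ℓ` points whose image is then fixed, so at most a fraction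
`(n - ℓ)! / (n - ℓ + |D|)! ≤ (n / 2) ^ (-|D|)` of all permutations are witnesses.
-/

open Finset SimpleGraph

namespace Submodule

theorem exists_finset_card_le_finrank_eq_zero_of_forall_mem {K X : Type*} [Field K] [Fintype X]
    (L : Submodule K (X → K)) :
    ∃ S : Finset X, #S ≤ Module.finrank K L ∧ ∀ x ∈ L, (∀ v ∈ S, x v = 0) → x = 0 := by
  classical
  induction h : Module.finrank K L using Nat.strong_induction_on generalizing L with
  | _ d ih =>
    obtain rfl | hL := eq_or_ne L ⊥
    · exact ⟨∅, by simp, fun x hx _ => by simpa using hx⟩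
    obtain ⟨x₀, hx₀L, hx₀⟩ := (Submodule.ne_bot_iff L).1 hL
    obtain ⟨v₀, hv₀⟩ := Function.ne_iff.1 hx₀
    set L' := L ⊓ LinearMap.ker (LinearMap.proj v₀)
    have hlt : L' < L := inf_le_left.lt_of_ne fun hL' => hv₀ (hL' ▸ hx₀L).2
    have hrank : Module.finrank K L' < d := h ▸ Submodule.finrank_lt_finrank_of_lt hlt
    obtain ⟨S, hS, hSL'⟩ := ih _ hrank L' rfl
    refine ⟨insert v₀ S, (card_insert_le _ _).trans (by omega), fun x hx hxS => ?_⟩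
    exact hSL' x ⟨hx, hxS v₀ (mem_insert_self _ _)⟩ fun v hv => hxS v (mem_insert_of_mem hv)

end Submodule

namespace SimpleGraph

variable {V : Type*} {G : SimpleGraph V}

theorem Reachable.eq_of_forall_adj {β : Type*} {f : V → β} (hf : ∀ a b, G.Adj a b → f a = f b)
    {a b : V} (h : G.Reachable a b) : f a = f b := by
  obtain ⟨p⟩ := h
  induction p with
  | nil => rfl
  | cons hadj _ ih => exact (hf _ _ hadj).trans ih

theorem Connected.exists_eq_sub_of_sum_darts_eq_zero {β : Type*} [AddCommGroup β]
    (hG : G.Connected) (w : V → V → β)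
    (hw : ∀ u (p : G.Walk u u), (p.darts.map fun d => w d.fst d.snd).sum = 0) :
    ∃ θ : V → β, ∀ a b, G.Adj a b → w a b = θ b - θ a := by
  let s : ∀ {a b : V}, G.Walk a b → β := fun p => (p.darts.map fun d => w d.fst d.snd).sum
  have s_append : ∀ {a b c : V} (p : G.Walk a b) (q : G.Walk b c), s (p.append q) = s p + s q :=
    fun p q => by simp [s]
  have s_cons : ∀ {a b c : V} (h : G.Adj a b) (p : G.Walk b c), s (.cons h p) = w a b + s p :=
    fun h p => by simp [s]
  obtain ⟨v₀⟩ := hG.nonempty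
  -- `θ v` sums `w` along a fixed walk `v₀ → v`; comparing the closed walks `a → b → v₀ → a` and
  -- `b → v₀ → b` gives `w a b = θ b - θ a`.
  let θ : V → β := fun v => s (hG.preconnected v₀ v).some
  let q : ∀ v, G.Walk v v₀ := fun v => (hG.preconnected v v₀).some
  refine ⟨θ, fun a b hab => ?_⟩
  have ha := hw a ((Walk.cons hab (q b)).append (hG.preconnected v₀ a).some)
  have hb := hw b ((q b).append (hG.preconnected v₀ b).some)
  change s _ = 0 at ha hb
  rw [s_append, s_cons] at ha
  rw [s_append] at hb
  rw [eq_sub_iff_add_eq, ← sub_eq_zero]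
  calc w a b + θ a - θ b = (w a b + s (q b) + θ a) - (s (q b) + θ b) := by abel
    _ = 0 := by rw [ha, hb, sub_zero]

end SimpleGraph

section

open Nat

namespace Equiv.Perm

variable {α β : Type*} [Fintype α] [DecidableEq α] [Fintype β]

theorem card_filter_apply_embedding_eq_le_factorial (ι : β ↪ α) (σ₀ : Perm α) :
    #{σ : Perm α | ∀ b, σ (ι b) = σ₀ (ι b)} ≤ (Fintype.card α - Fintype.card β)! := by
  classical
  let p : α → Prop := fun a => a ∉ Set.range ι
  let fixing : {σ : Perm α // ∀ b, σ (ι b) = σ₀ (ι b)} → {τ : Perm α // ∀ a, ¬p a → τ a = a} :=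
    fun σ => ⟨σ₀⁻¹ * σ, by
      intro a ha
      obtain ⟨b, rfl⟩ := not_not.1 ha
      simp [σ.2 b]⟩
  have hfixing : Function.Injective fixing := fun σ σ' h =>
    Subtype.ext (mul_left_cancel (congrArg Subtype.val h))
  calc #{σ : Perm α | ∀ b, σ (ι b) = σ₀ (ι b)}
      = Fintype.card {σ : Perm α // ∀ b, σ (ι b) = σ₀ (ι b)} := (Fintype.card_subtype _).symm
    _ ≤ Fintype.card {τ : Perm α // ∀ a, ¬p a → τ a = a} := Fintype.card_le_of_injective _ hfixing
    _ = Fintype.card (Perm (Subtype p)) :=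
      (Fintype.card_congr (Perm.subtypeEquivSubtypePerm p)).symm
    _ = (Fintype.card α - Fintype.card β)! := by
      rw [Fintype.card_perm, Fintype.card_subtype_compl, Fintype.card_range]

theorem card_le_descFactorial_mul_factorial (ι : β ↪ α) (D : Finset β) (W : Finset (Perm α))
    (hW : ∀ σ ∈ W, ∀ σ' ∈ W, (∀ b ∉ D, σ (ι b) = σ' (ι b)) → ∀ b, σ (ι b) = σ' (ι b)) :
    #W ≤ (Fintype.card α).descFactorial (Fintype.card β - #D) *
      (Fintype.card α - Fintype.card β)! := by
  classical
  let restrict : Perm α → ({b // b ∉ D} ↪ α) := fun σ =>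
    (Function.Embedding.subtype _).trans (ι.trans σ.toEmbedding)
  have hfiber : ∀ ρ ∈ (univ : Finset ({b // b ∉ D} ↪ α)),
      #{σ ∈ W | restrict σ = ρ} ≤ (Fintype.card α - Fintype.card β)! := by
    intro ρ _
    obtain hempty | ⟨σ₀, hσ₀⟩ := (filter (restrict · = ρ) W).eq_empty_or_nonempty
    · simp [hempty]
    rw [mem_filter] at hσ₀
    refine le_trans (card_le_card fun σ hσ => ?_) (card_filter_apply_embedding_eq_le_factorial ι σ₀)
    rw [mem_filter] at hσ ⊢
    refine ⟨mem_univ _, hW σ hσ.1 σ₀ hσ₀.1 fun b hb => ?_⟩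
    exact DFunLike.congr_fun (hσ.2.trans hσ₀.2.symm) ⟨b, hb⟩
  calc #W ≤ (Fintype.card α - Fintype.card β)! * #(univ : Finset ({b // b ∉ D} ↪ α)) :=
        card_le_mul_card_image_of_maps_to (fun _ _ => mem_univ _) _ hfiber
    _ = _ := by
      rw [Finset.card_univ, Fintype.card_embedding_eq, Fintype.card_subtype_compl, Fintype.card_coe,
        mul_comm]

end Equiv.Perm

theorem descFactorial_mul_factorial_div_factorial_le {n ℓ d : ℕ} (hℓ : 2 * ℓ ≤ n) (hd : d ≤ ℓ) :
    (n.descFactorial (ℓ - d) * (n - ℓ)! : ℝ) / n ! ≤ ((n : ℝ) / 2) ^ (-(d : ℤ)) := by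
  have hsplit : n ! = (n - ℓ + d)! * n.descFactorial (ℓ - d) := by
    rw [← Nat.factorial_mul_descFactorial (by omega : ℓ - d ≤ n)]
    congr 2
    omega
  have hbase : (n : ℝ) / 2 ≤ (n - ℓ + 1 : ℕ) := by
    rw [div_le_iff₀ two_pos]
    exact_mod_cast (by omega : n ≤ (n - ℓ + 1) * 2)
  have hgrowth : ((n : ℝ) / 2) ^ d * (n - ℓ)! ≤ (n - ℓ + d)! := by
    calc ((n : ℝ) / 2) ^ d * (n - ℓ)! ≤ ((n - ℓ + 1 : ℕ) : ℝ) ^ d * (n - ℓ)! := by gcongr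
      _ ≤ (n - ℓ + d)! := by
        rw [mul_comm]
        exact_mod_cast Nat.factorial_mul_pow_le_factorial
  have hpos : 0 < ((n : ℝ) / 2) ^ d := by
    obtain rfl | hd₀ := Nat.eq_zero_or_pos d
    · simp
    · have : 0 < n := by omega
      positivity
  rw [zpow_neg, zpow_natCast, div_le_iff₀ (by positivity), hsplit, Nat.cast_mul,
    le_inv_mul_iff₀ hpos]
  calc ((n : ℝ) / 2) ^ d * (n.descFactorial (ℓ - d) * (n - ℓ)!)
      = n.descFactorial (ℓ - d) * (((n : ℝ) / 2) ^ d * (n - ℓ)!) := by ring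
    _ ≤ n.descFactorial (ℓ - d) * (n - ℓ + d)! := by gcongr
    _ = _ := mul_comm _ _

end

variable {V : Type*} {G : SimpleGraph V} {k : ℕ} {P : V → Fin k}

@[simp]
theorem mk_mem_crossSet {a b : V} : s(a, b) ∈ crossSet G P ↔ G.Adj a b ∧ P a ≠ P b := by
  simp [crossSet]

@[simp]
theorem spannedGraph_adj {a b : V} : (spannedGraph G P).Adj a b ↔ G.Adj a b ∧ P a ≠ P b := by
  rw [spannedGraph, fromEdgeSet_adj, mk_mem_crossSet]
  exact and_iff_left_of_imp fun h => h.1.ne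

theorem IsWitness.exists_potential (hG : G.Connected) (hP : ConnPartition G P)
    {g : V → ℝ} (h : IsWitness G g P) :
    ∃ φ : Fin k → ℝ, ∀ a b, (spannedGraph G P).Adj a b → g a + φ (P a) = g b + φ (P b) := by
  obtain ⟨F, hF0, -, hFedge, hFcyc⟩ := h
  obtain ⟨θ, hθ⟩ := hG.exists_eq_sub_of_sum_darts_eq_zero (fun a b => F (P a) (P b)) hFcyc
  have hblock : ∀ a b, P a = P b → θ a = θ b := by
    intro a b hab
    refine ((hP.2 (P b)).preconnected ⟨a, hab⟩ ⟨b, rfl⟩).eq_of_forall_adj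
      (f := fun x => θ x.1) ?_
    rintro ⟨x, hx⟩ ⟨y, hy⟩ hxy
    have hxy := hθ x y hxy
    rw [Set.mem_preimage, Set.mem_singleton_iff] at hx hy
    rw [hx, hy, hF0] at hxy
    exact (sub_eq_zero.1 hxy.symm).symm
  refine ⟨fun i => θ (Function.surjInv hP.1 i), fun a b hab => ?_⟩
  rw [spannedGraph_adj] at hab
  have hga := hFedge a b hab.1 hab.2
  have hθab := hθ a b hab.1
  have ha := hblock _ a (Function.surjInv_eq hP.1 (P a))
  have hb := hblock _ b (Function.surjInv_eq hP.1 (P b))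
  dsimp only
  linarith

variable (G P)

abbrev CrossVertex : Type _ := {v : V // ∃ e ∈ crossSet G P, v ∈ e}

abbrev CrossComponent : Type _ := {c : (spannedGraph G P).ConnectedComponent //
    ∃ v w : V, v ≠ w ∧ (spannedGraph G P).connectedComponentMk v = c ∧
      (spannedGraph G P).connectedComponentMk w = c}

variable {G P}

theorem CrossVertex.exists_adj (v : CrossVertex G P) : ∃ w, (spannedGraph G P).Adj v w := by
  obtain ⟨e, he, hv⟩ := v.2
  induction e using Sym2.ind with
  | h a b =>
    rw [mk_mem_crossSet] at he
    rcases Sym2.mem_iff.1 hv with hva | hvb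
    · exact ⟨b, hva ▸ spannedGraph_adj.2 he⟩
    · exact ⟨a, hvb ▸ spannedGraph_adj.2 ⟨he.1.symm, he.2.symm⟩⟩

def CrossVertex.component (v : CrossVertex G P) : CrossComponent G P :=
  ⟨(spannedGraph G P).connectedComponentMk v, by
    obtain ⟨w, hw⟩ := v.exists_adj
    exact ⟨v, w, hw.ne, rfl, ConnectedComponent.eq.2 hw.symm.reachable⟩⟩

variable (G P)

noncomputable def potentialMap :
    (Fin k → ℝ) × (CrossComponent G P → ℝ) →ₗ[ℝ] (CrossVertex G P → ℝ) :=
  (-LinearMap.funLeft ℝ ℝ fun v : CrossVertex G P => P v).coprod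
    (LinearMap.funLeft ℝ ℝ CrossVertex.component)

variable {G P}

theorem potentialMap_apply (φ : Fin k → ℝ) (c : CrossComponent G P → ℝ) (v : CrossVertex G P) :
    potentialMap G P (φ, c) v = c v.component - φ (P v) := by
  simp [potentialMap, neg_add_eq_sub]

theorem finrank_range_potentialMap_lt [Finite V] (hk : 0 < k) :
    Module.finrank ℝ (LinearMap.range (potentialMap G P)) < k + C2count G P := by
  have : Fintype (CrossComponent G P) := Fintype.ofFinite _
  have hsum := LinearMap.finrank_range_add_finrank_ker (potentialMap G P)
  rw [Module.finrank_prod, Module.finrank_fintype_fun_eq_card, Module.finrank_fintype_fun_eq_card,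
    Fintype.card_fin, ← Nat.card_eq_fintype_card] at hsum
  have hker : LinearMap.ker (potentialMap G P) ≠ ⊥ := by
    refine (Submodule.ne_bot_iff _).2 ⟨(1, 1), ?_, fun h => ?_⟩
    · ext v
      simp [potentialMap_apply]
    · simpa using congrFun (congrArg Prod.fst h) ⟨0, hk⟩
  have := Submodule.finrank_eq_zero.not.2 hker
  change _ < k + Nat.card (CrossComponent G P)
  omega

theorem IsWitness.restrict_mem_range_potentialMap (hG : G.Connected)
    (hP : ConnPartition G P) {g : V → ℝ} (h : IsWitness G g P) :
    (fun v : CrossVertex G P => g v) ∈ LinearMap.range (potentialMap G P) := by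
  obtain ⟨φ, hφ⟩ := h.exists_potential hG hP
  let c : (spannedGraph G P).ConnectedComponent → ℝ :=
    ConnectedComponent.lift (fun v => g v + φ (P v))
      fun _ _ p _ => p.reachable.eq_of_forall_adj hφ
  refine ⟨(φ, fun C => c C.1), funext fun v => ?_⟩
  rw [potentialMap_apply]
  simp [CrossVertex.component, c]

theorem exists_finset_eq_of_isWitness_of_eqOn_compl [Fintype V] (hG : G.Connected)
    (hP : ConnPartition G P) :
    ∃ D : Finset V, (Vprime G P : ℤ) - C2count G P - (k - 1) ≤ #D ∧
      ∀ g g' : V → ℝ, IsWitness G g P → IsWitness G g' P → (∀ v ∉ D, g v = g' v) → g = g' := by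
  classical
  have hrank := finrank_range_potentialMap_lt (G := G) (P := P) (P hG.nonempty.some).pos
  obtain ⟨S, hS, hSsep⟩ :=
    (LinearMap.range (potentialMap G P)).exists_finset_card_le_finrank_eq_zero_of_forall_mem
  refine ⟨Sᶜ.map (Function.Embedding.subtype _), ?_, fun g g' hg hg' hgg' => ?_⟩
  · have hSV : #S ≤ Vprime G P := (card_le_univ S).trans_eq Nat.card_eq_fintype_card.symm
    rw [card_map, card_compl, ← Nat.card_eq_fintype_card]
    change _ ≤ ((Vprime G P - #S : ℕ) : ℤ)
    omega
  · have hzero := hSsep _ (sub_mem (hg.restrict_mem_range_potentialMap hG hP)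
      (hg'.restrict_mem_range_potentialMap hG hP)) fun x hx => sub_eq_zero.2 <| hgg' x fun hxD => by
        obtain ⟨y, hy, hyx⟩ := mem_map.1 hxD
        exact mem_compl.1 hy (Subtype.ext hyx ▸ hx)
    funext v
    by_cases hv : v ∈ Sᶜ.map (Function.Embedding.subtype _)
    · obtain ⟨x, -, rfl⟩ := mem_map.1 hv
      exact sub_eq_zero.1 (congrFun hzero x)
    · exact hgg' v hv

/-- For a uniformly random permutation `σ` of `Fin n`, the probability that a fixed connected
partition `S₁, …, S_k` of `Fin ℓ` (with `ℓ ≤ n/2`) is a witness with respect to `G` and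
`f ∘ σ` is at most `(n/2)^{-(V' - C₂ - (k-1))}`. -/
theorem stmt5 {n ℓ k : ℕ} (hln : 2 * ℓ ≤ n)
    (f : Fin n → ℝ) (hf : Function.Injective f)
    (G : SimpleGraph (Fin ℓ)) (hG : G.Connected)
    (P : Fin ℓ → Fin k) (hP : ConnPartition G P) :
    ((Nat.card {σ : Equiv.Perm (Fin n) //
        IsWitness G (fun i : Fin ℓ => f (σ (Fin.castLE (by omega) i))) P}) : ℝ) /
      (Nat.card (Equiv.Perm (Fin n)) : ℝ) ≤
    ((n : ℝ) / 2) ^ (-((Vprime G P : ℤ) - (C2count G P : ℤ) - ((k : ℤ) - 1))) := by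
  classical
  have hℓn : ℓ ≤ n := by omega
  obtain ⟨D, hD, hdet⟩ := exists_finset_eq_of_isWitness_of_eqOn_compl hG hP
  have hcount := Equiv.Perm.card_le_descFactorial_mul_factorial (Fin.castLEEmb hℓn) D
    {σ | IsWitness G (fun i => f (σ (Fin.castLE hℓn i))) P}
    fun σ hσ σ' hσ' hagree b => hf <| congrFun (hdet _ _ (mem_filter.1 hσ).2 (mem_filter.1 hσ').2
      fun v hv => congrArg f (hagree v hv)) b
  simp only [Fintype.card_fin] at hcount
  have hn : 1 ≤ (n : ℝ) / 2 := by
    rw [le_div_iff₀ two_pos, one_mul]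
    exact_mod_cast (by have := hG.nonempty.some.pos; omega : 2 ≤ n)
  calc _ = (#{σ : Equiv.Perm (Fin n) | IsWitness G (fun i => f (σ (Fin.castLE hℓn i))) P} : ℝ) /
        n.factorial := by
        rw [Nat.card_eq_fintype_card, Fintype.card_subtype, Nat.card_perm, Nat.card_eq_fintype_card,
          Fintype.card_fin]
    _ ≤ (n.descFactorial (ℓ - #D) * (n - ℓ).factorial : ℝ) / n.factorial := by
        gcongr
        exact_mod_cast hcount
    _ ≤ ((n : ℝ) / 2) ^ (-(#D : ℤ)) := descFactorial_mul_factorial_div_factorial_le hln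
        ((card_le_univ D).trans_eq (Fintype.card_fin ℓ))
    _ ≤ _ := zpow_le_zpow_right₀ hn (by omega)
end

section
/- Let c ∈ (0,1], and let m, N be integers with 1 ≤ m ≤ cN/100. Let G be a c-expander graph on N vertices with minimum degree at least 3, and let E_0 be a set of m edges of G. Then there exists a subgraph G′ of G − E_0 (a graph whose vertex set is a subset of V(G) and whose edge set is a subset of E(G) ∖ E_0) such that: (i) |V(G′)| ≥ N/2; (ii) G′ has minimum degree at least 2; (iii) G′ contains at least N/4 vertices of degree (in G′) at least 3; (iv) G′ is a (c/10)-expander. -/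
/-- The set of edges of `G` with exactly one endpoint in `S`. -/
def edgeBoundary {V : Type*} (G : SimpleGraph V) (S : Set V) : Set (Sym2 V) :=
  {e | ∃ a b, e = s(a, b) ∧ G.Adj a b ∧ a ∈ S ∧ b ∉ S}

/-- `G` is an `α`-expander: every nonempty vertex set `S` with `|S| ≤ |V|/2` satisfies
`e(S, Sᶜ) ≥ α · Σ_{v ∈ S} deg v`. -/
def IsExpander {V : Type*} [Fintype V] (G : SimpleGraph V) (α : ℝ) : Prop :=
  ∀ S : Finset V, S.Nonempty → 2 * S.card ≤ Fintype.card V →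
    α * (∑ v ∈ S, (Nat.card (G.neighborSet v) : ℝ)) ≤ (Nat.card (edgeBoundary G ↑S) : ℝ)

/-
Delete `E₀` and keep removing from the current vertex set `U` either a set that does not
`(c/10)`-expand in `(G - E₀)[U]` or a vertex of degree at most one there. The removed part
`D = Uᶜ` satisfies the invariant `e(D, U) ≤ (c/10) vol(D) + (deleted edges at D)`; since `G` is a
`c`-expander this forces `vol(D) = O(m / c)`, so `|D| ≤ N/90` throughout and the process stops
at a `(c/10)`-expander of minimum degree two. A vertex of degree at most two in it is incident
to a deleted edge or to an edge into `D`, and there are `O(m)` of those.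
-/

open Finset

theorem Finset.compl_sdiff_eq_compl_union {V : Type*} [Fintype V] [DecidableEq V]
    (U S : Finset V) : (U \ S)ᶜ = Uᶜ ∪ S := by
  rw [compl_sdiff, himp_eq, sup_comm]
  rfl

theorem Finset.card_filter_lt_add_sum_le_sum {ι : Type*} (s : Finset ι) {f g : ι → ℕ}
    (h : ∀ i ∈ s, f i ≤ g i) : #{i ∈ s | f i < g i} + ∑ i ∈ s, f i ≤ ∑ i ∈ s, g i := by
  rw [card_filter, ← sum_add_distrib]
  refine sum_le_sum fun i hi => ?_
  have := h i hi
  split_ifs <;> omega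

namespace SimpleGraph

section

variable {V : Type*} (G : SimpleGraph V) [DecidableRel G.Adj]

theorem card_interedges_comm (s t : Finset V) :
    #(G.interedges s t) = #(G.interedges t s) :=
  haveI : Std.Symm G.Adj := ⟨fun _ _ h => h.symm⟩
  Rel.card_interedges_comm s t

theorem card_interedges_le_of_le {H : SimpleGraph V} [DecidableRel H.Adj] (hHG : H ≤ G)
    (s t : Finset V) : #(H.interedges s t) ≤ #(G.interedges s t) :=
  card_le_card fun _ hp => by
    rw [mem_interedges_iff] at hp ⊢
    exact ⟨hp.1, hp.2.1, hHG hp.2.2⟩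

theorem card_interedges_eq_sum (s t : Finset V) :
    #(G.interedges s t) = ∑ a ∈ s, #{b ∈ t | G.Adj a b} := by
  rw [interedges_def, card_filter, sum_product]
  exact sum_congr rfl fun a _ => (card_filter _ _).symm

theorem card_interedges_eq_sum_singleton (s t : Finset V) :
    #(G.interedges s t) = ∑ a ∈ s, #(G.interedges {a} t) := by
  simp only [card_interedges_eq_sum, sum_singleton]

theorem card_interedges_union_left [DecidableEq V] {s₁ s₂ : Finset V} (h : Disjoint s₁ s₂)
    (t : Finset V) :
    #(G.interedges (s₁ ∪ s₂) t) = #(G.interedges s₁ t) + #(G.interedges s₂ t) := by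
  rw [← card_union_of_disjoint (G.interedges_disjoint_left h t)]
  congr 1
  ext
  simp only [mem_interedges_iff, mem_union]
  tauto

theorem card_interedges_union_right [DecidableEq V] (s : Finset V) {t₁ t₂ : Finset V}
    (h : Disjoint t₁ t₂) :
    #(G.interedges s (t₁ ∪ t₂)) = #(G.interedges s t₁) + #(G.interedges s t₂) := by
  rw [← card_union_of_disjoint (G.interedges_disjoint_right s h)]
  congr 1
  ext
  simp only [mem_interedges_iff, mem_union]
  tauto

variable [Fintype V]

theorem card_interedges_singleton_univ (v : V) :
    #(G.interedges {v} univ) = G.degree v := by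
  rw [card_interedges_eq_sum, sum_singleton, ← card_neighborFinset_eq_degree,
    neighborFinset_eq_filter]

theorem natCard_neighborSet (v : V) :
    Nat.card (G.neighborSet v) = #(G.interedges {v} univ) := by
  rw [card_interedges_singleton_univ, Nat.card_eq_fintype_card, card_neighborSet_eq_degree]

theorem mul_card_le_card_interedges_univ {k : ℕ} {s : Finset V} (h : ∀ v ∈ s, k ≤ G.degree v) :
    k * #s ≤ #(G.interedges s univ) := by
  rw [card_interedges_eq_sum_singleton, mul_comm, ← smul_eq_mul]
  exact card_nsmul_le_sum _ _ _ fun v hv => (card_interedges_singleton_univ G v).symm ▸ h v hv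

variable [DecidableEq V]

theorem card_interedges_add_card_interedges_compl_right (s t : Finset V) :
    #(G.interedges s t) + #(G.interedges s tᶜ) = #(G.interedges s univ) := by
  rw [← card_interedges_union_right G s disjoint_compl_right, union_compl]

theorem natCard_edgeBoundary (S : Finset V) :
    Nat.card (edgeBoundary G ↑S) = #(G.interedges S Sᶜ) := by
  have himage : edgeBoundary G ↑S = ↑((G.interedges S Sᶜ).image fun p => s(p.1, p.2)) := by
    ext e
    simp only [edgeBoundary, Set.mem_ofPred_eq, coe_image, Set.mem_image, mem_coe,
      mem_interedges_iff, mem_compl, Prod.exists]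
    constructor
    · rintro ⟨a, b, rfl, hab, ha, hb⟩
      exact ⟨a, b, ⟨ha, hb, hab⟩, rfl⟩
    · rintro ⟨a, b, ⟨ha, hb, hab⟩, rfl⟩
      exact ⟨a, b, rfl, hab, ha, hb⟩
  rw [himage, Nat.card_coe_set_eq, Set.ncard_coe_finset, card_image_of_injOn]
  rintro ⟨a, b⟩ hp ⟨a', b'⟩ hq h
  simp only [mem_coe, mem_interedges_iff, mem_compl] at hp hq
  rcases Sym2.eq_iff.1 h with ⟨rfl, rfl⟩ | ⟨rfl, rfl⟩
  · rfl
  · exact absurd hq.1 hp.2.1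

theorem isExpander_iff_card_interedges (α : ℝ) :
    IsExpander G α ↔ ∀ S : Finset V, S.Nonempty → 2 * #S ≤ Fintype.card V →
      α * #(G.interedges S univ) ≤ #(G.interedges S Sᶜ) := by
  simp only [IsExpander, natCard_neighborSet, natCard_edgeBoundary, ← Nat.cast_sum,
    ← card_interedges_eq_sum_singleton]

end

section

variable {V : Type*} [DecidableEq V] (G : SimpleGraph V) [DecidableRel G.Adj]
  (E : Finset (Sym2 V))

theorem card_interedges_eq_deleteEdges_add (s t : Finset V) :
    #(G.interedges s t) =
      #((G.deleteEdges ↑E).interedges s t) + #{p ∈ G.interedges s t | s(p.1, p.2) ∈ E} := by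
  rw [← card_filter_add_card_filter_not (fun p : V × V => s(p.1, p.2) ∈ E), add_comm]
  congr 2
  ext p
  simp only [mem_filter, mem_interedges_iff, deleteEdges_adj, mem_coe]
  tauto

theorem card_interedges_le_deleteEdges_add {s t : Finset V} (hst : Disjoint s t) :
    #(G.interedges s t) ≤ #((G.deleteEdges ↑E).interedges s t) + #E := by
  rw [card_interedges_eq_deleteEdges_add G E]
  refine Nat.add_le_add_left (card_le_card_of_injOn (fun p : V × V => s(p.1, p.2))
    (fun p hp => (mem_filter.1 hp).2) ?_) _
  rintro ⟨a, b⟩ hp ⟨a', b'⟩ hq h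
  simp only [coe_filter, Set.mem_ofPred_eq, mem_interedges_iff] at hp hq
  rcases Sym2.eq_iff.1 h with ⟨rfl, rfl⟩ | ⟨rfl, rfl⟩
  · rfl
  · exact absurd hp.1.2.1 (Finset.disjoint_left.1 hst hq.1.1)

theorem card_interedges_le_deleteEdges_add_two_mul (s t : Finset V) :
    #(G.interedges s t) ≤ #((G.deleteEdges ↑E).interedges s t) + 2 * #E := by
  rw [card_interedges_eq_deleteEdges_add G E]
  set F := {p ∈ G.interedges s t | s(p.1, p.2) ∈ E}
  -- each edge `s(a, b)` comes from at most the two ordered pairs `(a, b)` and `(b, a)`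
  have hfiber : ∀ e ∈ F.image (fun p => s(p.1, p.2)), #{p ∈ F | s(p.1, p.2) = e} ≤ 2 := by
    intro e _
    induction e using Sym2.ind with
    | h a b =>
      refine (card_le_card (t := {(a, b), (b, a)}) fun p hp => ?_).trans card_le_two
      rcases Sym2.eq_iff.1 (mem_filter.1 hp).2 with ⟨h₁, h₂⟩ | ⟨h₁, h₂⟩ <;>
        simp [Prod.ext_iff, h₁, h₂]
  have himage : F.image (fun p => s(p.1, p.2)) ⊆ E := by
    simp only [image_subset_iff]
    exact fun p hp => (mem_filter.1 hp).2
  exact Nat.add_le_add_left ((card_le_mul_card_image F 2 hfiber).trans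
    (Nat.mul_le_mul_left 2 (card_le_card himage))) _

variable [Fintype V]

/-- A vertex of `U` that has lost degree in `(G - E)[U]` is incident to a deleted edge or to an
edge leaving `U`. -/
theorem card_filter_card_interedges_lt_le {k : ℕ} (hδ : ∀ v, k ≤ G.degree v) (U : Finset V) :
    #{v ∈ U | #((G.deleteEdges ↑E).interedges {v} U) < k} ≤
      2 * #E + #((G.deleteEdges ↑E).interedges Uᶜ U) := by
  have hsub : {v ∈ U | #((G.deleteEdges ↑E).interedges {v} U) < k} ⊆
      {v ∈ (univ : Finset V) |
        #((G.deleteEdges ↑E).interedges {v} univ) < #(G.interedges {v} univ)} ∪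
      {v ∈ U | 0 < #((G.deleteEdges ↑E).interedges {v} Uᶜ)} := by
    intro v hv
    obtain ⟨hvU, hlt⟩ := mem_filter.1 hv
    have := card_interedges_add_card_interedges_compl_right (G.deleteEdges ↑E) {v} U
    have := card_interedges_singleton_univ G v
    have := hδ v
    simp only [mem_union, mem_filter, mem_univ, true_and, hvU]
    omega
  have hlost := card_filter_lt_add_sum_le_sum (univ : Finset V) fun v _ =>
    card_interedges_le_of_le G (deleteEdges_le (↑E)) {v} univ
  have hleaving := card_filter_lt_add_sum_le_sum U (f := 0) fun v _ =>
    Nat.zero_le #((G.deleteEdges ↑E).interedges {v} Uᶜ)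
  have hdeleted := card_interedges_le_deleteEdges_add_two_mul G E univ univ
  simp only [← card_interedges_eq_sum_singleton, Pi.zero_apply, sum_const_zero] at hlost hleaving
  rw [card_interedges_comm _ U] at hleaving
  have := (card_le_card hsub).trans (card_union_le _ _)
  omega

end

section

variable {V : Type*} (H : SimpleGraph V) [DecidableRel H.Adj] (U : Finset V)

theorem card_interedges_comap_val (S T : Finset U) :
    #((H.comap Subtype.val).interedges S T) =
      #(H.interedges (S.map (.subtype _)) (T.map (.subtype _))) := by
  rw [← card_map ((Function.Embedding.subtype (· ∈ U)).prodMap (.subtype _))]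
  congr 1
  ext ⟨a, b⟩
  simp only [mem_map, mem_interedges_iff, comap_adj, Prod.exists, Function.Embedding.coe_prodMap,
    Function.Embedding.coe_subtype, Prod.map_apply, Prod.mk.injEq, Subtype.exists,
    exists_and_right, exists_eq_right]
  aesop

theorem natCard_neighborSet_comap_val (v : U) :
    Nat.card ((H.comap Subtype.val).neighborSet v) = #(H.interedges {↑v} U) := by
  rw [natCard_neighborSet, card_interedges_comap_val, map_singleton, univ_eq_attach,
    attach_map_val]
  rfl

theorem natCard_subtype_le_natCard_neighborSet_comap_val (k : ℕ) :
    Nat.card {v : U // k ≤ Nat.card ((H.comap Subtype.val).neighborSet v)} =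
      #{v ∈ U | k ≤ #(H.interedges {v} U)} := by
  simp only [natCard_neighborSet_comap_val]
  rw [Nat.card_eq_fintype_card, Fintype.card_subtype, ← card_map (.subtype _), univ_eq_attach]
  congr 1
  ext
  simp [and_comm]

theorem isExpander_comap_val [DecidableEq V] {α : ℝ}
    (h : ∀ S ⊆ U, S.Nonempty → 2 * #S ≤ #U →
      α * #(H.interedges S U) ≤ #(H.interedges S (U \ S))) :
    IsExpander (H.comap ((↑) : U → V)) α := by
  rw [isExpander_iff_card_interedges]
  intro S hS hcard
  have hU : (univ : Finset U).map (.subtype (· ∈ U)) = U := by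
    rw [univ_eq_attach, attach_map_val]
  rw [card_interedges_comap_val, card_interedges_comap_val, compl_eq_univ_sdiff,
    Finset.map_sdiff, hU]
  refine h _ ?_ hS.map (by simpa using hcard)
  exact fun _ hx => property_of_mem_map_subtype S hx

end

section

variable {V : Type*} [Fintype V] [DecidableEq V] (G H : SimpleGraph V) [DecidableRel G.Adj]
  [DecidableRel H.Adj] (α : ℝ)

/-- Invariant of the cleaning process, with `H` the graph `G` minus the deleted edges and `Uᶜ` the
vertices removed so far: the `H`-edges from `Uᶜ` back into `U` are paid for by an `α`-fraction of
the `H`-volume of `Uᶜ` plus the number of deleted edges at `Uᶜ`. Here `#(H.interedges s t)` counts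
ordered adjacent pairs in `s × t`, so `#(H.interedges s univ)` is the volume `∑ v ∈ s, H.degree v`.
-/
def WithinBudget (U : Finset V) : Prop :=
  (#(H.interedges Uᶜ U) : ℝ) ≤
    α * #(H.interedges Uᶜ univ) + (#(G.interedges Uᶜ univ) - #(H.interedges Uᶜ univ))

variable {G H α}

theorem withinBudget_univ : WithinBudget G H α univ := by
  simp [WithinBudget]

theorem WithinBudget.sdiff {U S : Finset V} (hU : WithinBudget G H α U) (hSU : S ⊆ U)
    (hS : (#(H.interedges S (U \ S)) : ℝ) ≤ #(H.interedges S Uᶜ) + α * #(H.interedges S univ) +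
      (#(G.interedges S univ) - #(H.interedges S univ))) :
    WithinBudget G H α (U \ S) := by
  have hcompl := compl_sdiff_eq_compl_union U S
  have hdisj : Disjoint Uᶜ S := disjoint_compl_left.mono_right hSU
  have hinto : #(H.interedges Uᶜ U) = #(H.interedges Uᶜ (U \ S)) + #(H.interedges S Uᶜ) := by
    rw [card_interedges_comm H S Uᶜ, ← card_interedges_union_right H _ sdiff_disjoint,
      sdiff_union_of_subset hSU]
  have hout : #(H.interedges (U \ S)ᶜ (U \ S)) =
      #(H.interedges Uᶜ (U \ S)) + #(H.interedges S (U \ S)) := by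
    rw [hcompl, card_interedges_union_left H hdisj]
  have hvolH :
      #(H.interedges (U \ S)ᶜ univ) = #(H.interedges Uᶜ univ) + #(H.interedges S univ) := by
    rw [hcompl, card_interedges_union_left H hdisj]
  have hvolG :
      #(G.interedges (U \ S)ᶜ univ) = #(G.interedges Uᶜ univ) + #(G.interedges S univ) := by
    rw [hcompl, card_interedges_union_left G hdisj]
  unfold WithinBudget at hU ⊢
  rw [hout, hvolH, hvolG]
  rw [hinto] at hU
  push_cast at hU ⊢
  linarith

theorem WithinBudget.sdiff_of_lt {U S : Finset V} (hHG : H ≤ G) (hα : 0 ≤ α)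
    (hU : WithinBudget G H α U) (hSU : S ⊆ U)
    (hS : (#(H.interedges S (U \ S)) : ℝ) < α * #(H.interedges S U)) :
    WithinBudget G H α (U \ S) := by
  refine hU.sdiff hSU ?_
  have hUvol : (#(H.interedges S U) : ℝ) ≤ #(H.interedges S univ) := by
    exact_mod_cast card_le_card (H.interedges_mono subset_rfl (subset_univ U))
  have hHGvol : (#(H.interedges S univ) : ℝ) ≤ #(G.interedges S univ) := by
    exact_mod_cast card_interedges_le_of_le G hHG S univ
  have : (0 : ℝ) ≤ #(H.interedges S Uᶜ) := Nat.cast_nonneg _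
  nlinarith

theorem WithinBudget.sdiff_singleton {U : Finset V} {v : V} (hα : 0 ≤ α)
    (hU : WithinBudget G H α U) (hv : v ∈ U)
    (hdeg : 2 * #(H.interedges {v} U) ≤ #(G.interedges {v} univ)) :
    WithinBudget G H α (U \ {v}) := by
  refine hU.sdiff (singleton_subset_iff.2 hv) ?_
  have hsub : (#(H.interedges {v} (U \ {v})) : ℝ) ≤ #(H.interedges {v} U) := by
    exact_mod_cast card_le_card (H.interedges_mono subset_rfl sdiff_subset)
  have hsplit : (#(H.interedges {v} U) : ℝ) + #(H.interedges {v} Uᶜ) =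
      #(H.interedges {v} univ) := by
    exact_mod_cast card_interedges_add_card_interedges_compl_right H {v} U
  have hdeg' : 2 * (#(H.interedges {v} U) : ℝ) ≤ #(G.interedges {v} univ) := by
    exact_mod_cast hdeg
  have : (0 : ℝ) ≤ α * #(H.interedges {v} univ) := by positivity
  linarith

end

namespace WithinBudget

variable {V : Type*} [Fintype V] [DecidableEq V] {G : SimpleGraph V} [DecidableRel G.Adj]
  {E : Finset (Sym2 V)} {c : ℝ} {U : Finset V}

theorem card_interedges_compl_le {α : ℝ} (hα : 0 ≤ α)
    (hU : WithinBudget G (G.deleteEdges ↑E) α U) :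
    #((G.deleteEdges ↑E).interedges Uᶜ U) ≤ α * #(G.interedges Uᶜ univ) + 2 * (#E : ℝ) := by
  have hdeleted : (#(G.interedges Uᶜ univ) : ℝ) ≤
      #((G.deleteEdges ↑E).interedges Uᶜ univ) + 2 * #E := by
    exact_mod_cast card_interedges_le_deleteEdges_add_two_mul G E Uᶜ univ
  have hle : (#((G.deleteEdges ↑E).interedges Uᶜ univ) : ℝ) ≤ #(G.interedges Uᶜ univ) := by
    exact_mod_cast card_interedges_le_of_le G (deleteEdges_le _) Uᶜ univ
  have := mul_le_mul_of_nonneg_left hle hα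
  unfold WithinBudget at hU
  linarith

theorem vol_compl_le (hc : 0 ≤ c) (hexp : IsExpander G c)
    (hU : WithinBudget G (G.deleteEdges ↑E) (c / 10) U) (hUc : 2 * #Uᶜ ≤ Fintype.card V) :
    c * #(G.interedges Uᶜ univ) ≤ 10 / 3 * #E := by
  rcases Uᶜ.eq_empty_or_nonempty with hempty | hne
  · simp [hempty]
  have hexpand := (isExpander_iff_card_interedges G c).1 hexp Uᶜ hne hUc
  rw [compl_compl] at hexpand
  have hcross : (#(G.interedges Uᶜ U) : ℝ) ≤ #((G.deleteEdges ↑E).interedges Uᶜ U) + #E := by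
    exact_mod_cast card_interedges_le_deleteEdges_add G E disjoint_compl_left
  linarith [hU.card_interedges_compl_le (by positivity)]

theorem card_compl_le (hc : 0 ≤ c) (hexp : IsExpander G c) (hδ : ∀ v, 3 ≤ G.degree v)
    (hU : WithinBudget G (G.deleteEdges ↑E) (c / 10) U) (hUc : 2 * #Uᶜ ≤ Fintype.card V) :
    c * #Uᶜ ≤ 10 / 9 * #E := by
  have hdeg : (3 * #Uᶜ : ℝ) ≤ #(G.interedges Uᶜ univ) := by
    exact_mod_cast mul_card_le_card_interedges_univ G fun v _ => hδ v
  nlinarith [hU.vol_compl_le hc hexp hUc]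

theorem card_compl_le_card_div_ninety (hc : 0 < c) (hexp : IsExpander G c)
    (hδ : ∀ v, 3 ≤ G.degree v) (hE : (#E : ℝ) ≤ c * Fintype.card V / 100)
    (hU : WithinBudget G (G.deleteEdges ↑E) (c / 10) U) (hUc : 2 * #Uᶜ ≤ Fintype.card V) :
    (#Uᶜ : ℝ) ≤ Fintype.card V / 90 := by
  have := hU.card_compl_le hc.le hexp hδ hUc
  exact le_of_mul_le_mul_left (by linarith) hc

theorem boundary_le (hc : 0 ≤ c) (hexp : IsExpander G c)
    (hU : WithinBudget G (G.deleteEdges ↑E) (c / 10) U) (hUc : 2 * #Uᶜ ≤ Fintype.card V) :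
    #((G.deleteEdges ↑E).interedges Uᶜ U) ≤ 7 / 3 * (#E : ℝ) := by
  linarith [hU.card_interedges_compl_le (by positivity), hU.vol_compl_le hc hexp hUc]

/-- A set that does not expand in `(G - E)[U]` is small: it expands in `G`, and its boundary
consists of few edges inside `U`, edges into `Uᶜ` and deleted edges. -/
theorem card_le_of_lt (hc : 0 ≤ c) (hexp : IsExpander G c) (hδ : ∀ v, 3 ≤ G.degree v)
    (hU : WithinBudget G (G.deleteEdges ↑E) (c / 10) U) (hUc : 2 * #Uᶜ ≤ Fintype.card V)
    {S : Finset V} (hSU : S ⊆ U) (hS : S.Nonempty) (hSc : 2 * #S ≤ #U)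
    (hlt : (#((G.deleteEdges ↑E).interedges S (U \ S)) : ℝ) <
      c / 10 * #((G.deleteEdges ↑E).interedges S U)) :
    c * #S ≤ 100 / 81 * #E := by
  set H := G.deleteEdges ↑E
  have hexpand := (isExpander_iff_card_interedges G c).1 hexp S hS
    (hSc.trans (card_le_univ U))
  have hcross : (#(G.interedges S Sᶜ) : ℝ) ≤ #(H.interedges S Sᶜ) + #E := by
    exact_mod_cast card_interedges_le_deleteEdges_add G E disjoint_compl_right
  have hsplit : #(H.interedges S Sᶜ) = #(H.interedges S (U \ S)) + #(H.interedges Uᶜ S) := by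
    rw [card_interedges_comm H Uᶜ, ← card_interedges_union_right H S
      (disjoint_compl_right.mono_left sdiff_subset)]
    congr 2
    ext
    simp only [mem_compl, mem_union, mem_sdiff]
    tauto
  have hinto : #(H.interedges Uᶜ S) ≤ #(H.interedges Uᶜ U) :=
    card_le_card (H.interedges_mono subset_rfl hSU)
  have hUvol : (#(H.interedges S U) : ℝ) ≤ #(G.interedges S univ) := by
    exact_mod_cast (card_le_card (H.interedges_mono subset_rfl (subset_univ U))).trans
      (card_interedges_le_of_le G (deleteEdges_le _) S univ)
  have hdeg : (3 * #S : ℝ) ≤ #(G.interedges S univ) := by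
    exact_mod_cast mul_card_le_card_interedges_univ G fun v _ => hδ v
  have hboundary : (#(H.interedges Uᶜ S) : ℝ) ≤ 7 / 3 * #E :=
    (Nat.cast_le.2 hinto).trans (hU.boundary_le hc hexp hUc)
  have hsplit' : (#(H.interedges S Sᶜ) : ℝ) = #(H.interedges S (U \ S)) + #(H.interedges Uᶜ S) := by
    exact_mod_cast hsplit
  nlinarith [mul_le_mul_of_nonneg_left hUvol (by positivity : 0 ≤ c / 10)]

theorem two_mul_card_compl_sdiff_le (hc : 0 < c) (hexp : IsExpander G c)
    (hδ : ∀ v, 3 ≤ G.degree v) (hE : (#E : ℝ) ≤ c * Fintype.card V / 100)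
    (hU : WithinBudget G (G.deleteEdges ↑E) (c / 10) U) (hUc : 2 * #Uᶜ ≤ Fintype.card V)
    {S : Finset V} (hSU : S ⊆ U) (hS : S.Nonempty) (hSc : 2 * #S ≤ #U)
    (hlt : (#((G.deleteEdges ↑E).interedges S (U \ S)) : ℝ) <
      c / 10 * #((G.deleteEdges ↑E).interedges S U)) :
    2 * #(U \ S)ᶜ ≤ Fintype.card V := by
  have hUc' := hU.card_compl_le hc.le hexp hδ hUc
  have hS' := hU.card_le_of_lt hc.le hexp hδ hUc hSU hS hSc hlt
  have hunion : (#(U \ S)ᶜ : ℝ) ≤ #Uᶜ + #S := by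
    exact_mod_cast compl_sdiff_eq_compl_union U S ▸ card_union_le Uᶜ S
  have : c * (2 * #(U \ S)ᶜ) ≤ c * Fintype.card V := by nlinarith
  exact_mod_cast le_of_mul_le_mul_left this hc

theorem two_mul_card_compl_sdiff_singleton_le (hc : 0 < c) (hexp : IsExpander G c)
    (hδ : ∀ v, 3 ≤ G.degree v) (hE : (#E : ℝ) ≤ c * Fintype.card V / 100)
    (hU : WithinBudget G (G.deleteEdges ↑E) (c / 10) U) (hUc : 2 * #Uᶜ ≤ Fintype.card V)
    (v : V) : 2 * #(U \ {v})ᶜ ≤ Fintype.card V := by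
  have hsmall := hU.card_compl_le_card_div_ninety hc hexp hδ hE hUc
  have hunion : (#(U \ {v})ᶜ : ℝ) ≤ #Uᶜ + 1 := by
    exact_mod_cast compl_sdiff_eq_compl_union U {v} ▸ card_union_le Uᶜ {v}
  have hV : (4 : ℝ) ≤ Fintype.card V := by
    exact_mod_cast (hδ v).trans_lt (G.degree_lt_card_verts v)
  have : (2 * #(U \ {v})ᶜ : ℝ) ≤ Fintype.card V := by linarith
  exact_mod_cast this

theorem card_div_four_le_card_filter (hc : 0 < c) (hc1 : c ≤ 1)
    (hexp : IsExpander G c) (hδ : ∀ v, 3 ≤ G.degree v)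
    (hE : (#E : ℝ) ≤ c * Fintype.card V / 100)
    (hU : WithinBudget G (G.deleteEdges ↑E) (c / 10) U) (hUc : 2 * #Uᶜ ≤ Fintype.card V) :
    (Fintype.card V : ℝ) / 4 ≤ #{v ∈ U | 3 ≤ #((G.deleteEdges ↑E).interedges {v} U)} := by
  have hsplit := card_filter_add_card_filter_not (s := U)
    (fun v => 3 ≤ #((G.deleteEdges ↑E).interedges {v} U))
  simp only [not_le] at hsplit
  have hsplit' : (#{v ∈ U | 3 ≤ #((G.deleteEdges ↑E).interedges {v} U)} : ℝ) +
      #{v ∈ U | #((G.deleteEdges ↑E).interedges {v} U) < 3} = #U := by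
    exact_mod_cast hsplit
  have hlow : (#{v ∈ U | #((G.deleteEdges ↑E).interedges {v} U) < 3} : ℝ) ≤
      2 * #E + #((G.deleteEdges ↑E).interedges Uᶜ U) := by
    exact_mod_cast card_filter_card_interedges_lt_le G E hδ U
  have hboundary := hU.boundary_le hc.le hexp hUc
  have hsmall := hU.card_compl_le_card_div_ninety hc hexp hδ hE hUc
  have hcard : (#U : ℝ) + #Uᶜ = Fintype.card V := by exact_mod_cast card_add_card_compl U
  have hEV : (#E : ℝ) ≤ Fintype.card V / 100 := by nlinarith
  linarith

end WithinBudget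

section

variable {V : Type*} [Fintype V] [DecidableEq V] {G : SimpleGraph V} [DecidableRel G.Adj]
  {E : Finset (Sym2 V)} {c : ℝ}

theorem exists_expanding_core (hc : 0 < c) (hexp : IsExpander G c)
    (hδ : ∀ v, 3 ≤ G.degree v) (hE : (#E : ℝ) ≤ c * Fintype.card V / 100) :
    ∃ U : Finset V, WithinBudget G (G.deleteEdges ↑E) (c / 10) U ∧ 2 * #Uᶜ ≤ Fintype.card V ∧
      (∀ S ⊆ U, S.Nonempty → 2 * #S ≤ #U →
        c / 10 * #((G.deleteEdges ↑E).interedges S U) ≤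
          #((G.deleteEdges ↑E).interedges S (U \ S))) ∧
      ∀ v ∈ U, 2 ≤ #((G.deleteEdges ↑E).interedges {v} U) := by
  classical
  set stages : Finset (Finset V) := {U | WithinBudget G (G.deleteEdges ↑E) (c / 10) U ∧
    2 * #Uᶜ ≤ Fintype.card V}
  obtain ⟨U, hstage, hmin⟩ := stages.exists_min_image card
    ⟨univ, mem_filter.2 ⟨mem_univ _, withinBudget_univ, by simp⟩⟩
  obtain ⟨-, hU, hUc⟩ := mem_filter.1 hstage
  refine ⟨U, hU, hUc, fun S hSU hS hSc => ?_, fun v hv => ?_⟩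
  · by_contra! hlt
    have hnext : U \ S ∈ stages := mem_filter.2 ⟨mem_univ _,
      hU.sdiff_of_lt (deleteEdges_le _) (by positivity) hSU hlt,
      hU.two_mul_card_compl_sdiff_le hc hexp hδ hE hUc hSU hS hSc hlt⟩
    exact (hmin _ hnext).not_gt (card_lt_card (sdiff_ssubset hSU hS))
  · by_contra! hdeg
    have hdeg' : 2 * #((G.deleteEdges ↑E).interedges {v} U) ≤ #(G.interedges {v} univ) := by
      rw [card_interedges_singleton_univ]
      linarith [hδ v]
    have hnext : U \ {v} ∈ stages := mem_filter.2 ⟨mem_univ _,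
      hU.sdiff_singleton (by positivity) hv hdeg',
      hU.two_mul_card_compl_sdiff_singleton_le hc hexp hδ hE hUc v⟩
    exact (hmin _ hnext).not_gt (card_lt_card (sdiff_ssubset (singleton_subset_iff.2 hv)
      (singleton_nonempty v)))

end

end SimpleGraph

open SimpleGraph in
theorem stmt6_general (c : ℝ) (hc0 : 0 < c) (hc1 : c ≤ 1) (m N : ℕ)
    (hmc : (m : ℝ) ≤ c * N / 100)
    {V : Type*} [Fintype V] (hN : Fintype.card V = N)
    (G : SimpleGraph V) (hexp : IsExpander G c)
    (hδ : ∀ v : V, 3 ≤ Nat.card (G.neighborSet v))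
    (E₀ : Finset (Sym2 V)) (hE₀card : E₀.card = m) :
    ∃ (U : Finset V) (G' : SimpleGraph ↥U),
      (∀ a b : ↥U, G'.Adj a b → G.Adj ↑a ↑b ∧ s((a : V), (b : V)) ∉ E₀) ∧
      (N : ℝ) / 2 ≤ (U.card : ℝ) ∧
      (∀ v : ↥U, 2 ≤ Nat.card (G'.neighborSet v)) ∧
      (N : ℝ) / 4 ≤ (Nat.card {v : ↥U // 3 ≤ Nat.card (G'.neighborSet v)} : ℝ) ∧
      IsExpander G' (c / 10) := by
  classical
  have hdeg : ∀ v, 3 ≤ G.degree v := fun v => by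
    rw [← card_interedges_singleton_univ, ← natCard_neighborSet]
    exact hδ v
  subst hN hE₀card
  obtain ⟨U, hU, hUc, hexpU, hdegU⟩ := exists_expanding_core hc0 hexp hdeg hmc
  have hsmall := hU.card_compl_le_card_div_ninety hc0 hexp hdeg hmc hUc
  have hcard : (#U : ℝ) + #Uᶜ = Fintype.card V := by exact_mod_cast card_add_card_compl U
  refine ⟨U, (G.deleteEdges ↑E₀).comap ((↑) : U → V), fun a b hab => ?_, by linarith,
    fun v => ?_, ?_, isExpander_comap_val _ U hexpU⟩
  · simpa using deleteEdges_adj.1 (comap_adj.1 hab)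
  · rw [natCard_neighborSet_comap_val]
    exact hdegU v v.2
  · rw [natCard_subtype_le_natCard_neighborSet_comap_val]
    exact hU.card_div_four_le_card_filter hc0 hc1 hexp hdeg hmc hUc

/-- Removing `m ≤ cN/100` edges from a `c`-expander on `N` vertices with minimum degree at
least `3` leaves a subgraph `G'` on at least `N/2` vertices, of minimum degree at least `2`,
with at least `N/4` vertices of degree at least `3`, which is a `c/10`-expander. -/
theorem stmt6 (c : ℝ) (hc0 : 0 < c) (hc1 : c ≤ 1) (m N : ℕ) (hm1 : 1 ≤ m)
    (hmc : (m : ℝ) ≤ c * N / 100)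
    {V : Type*} [Fintype V] [DecidableEq V] (hN : Fintype.card V = N)
    (G : SimpleGraph V) (hexp : IsExpander G c)
    (hδ : ∀ v : V, 3 ≤ Nat.card (G.neighborSet v))
    (E₀ : Finset (Sym2 V)) (hE₀ : (↑E₀ : Set (Sym2 V)) ⊆ G.edgeSet) (hE₀card : E₀.card = m) :
    ∃ (U : Finset V) (G' : SimpleGraph ↥U),
      (∀ a b : ↥U, G'.Adj a b → G.Adj ↑a ↑b ∧ s((a : V), (b : V)) ∉ E₀) ∧
      (N : ℝ) / 2 ≤ (U.card : ℝ) ∧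
      (∀ v : ↥U, 2 ≤ Nat.card (G'.neighborSet v)) ∧
      (N : ℝ) / 4 ≤ (Nat.card {v : ↥U // 3 ≤ Nat.card (G'.neighborSet v)} : ℝ) ∧
      IsExpander G' (c / 10) :=
  stmt6_general c hc0 hc1 m N hmc hN G hexp hδ E₀ hE₀card
end

section
/- Fix ε > 0 and let p = (1+ε)/n. Then with high probability (probability tending to 1 as n → ∞), the random graph G(n,p) contains at most n^{3/4} cycles of length at most (log n)/(2ε), where cycles are counted as cycle subgraphs. (Logarithms are natural.) -/
open MeasureTheory Filter

/-- Graph built from edge indicator flags on non-diagonal unordered pairs. -/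
def graphOfFlags {n : ℕ} (χ : {e : Sym2 (Fin n) // ¬ e.IsDiag} → Bool) : SimpleGraph (Fin n) where
  Adj i j := i ≠ j ∧ ∀ h : ¬ (s(i, j) : Sym2 (Fin n)).IsDiag, χ ⟨s(i, j), h⟩ = true
  symm := by
    refine ⟨?_⟩
    intro i j ⟨hne, h⟩
    refine ⟨hne.symm, fun hd => ?_⟩
    have he : (s(j, i) : Sym2 (Fin n)) = s(i, j) := Sym2.eq_swap
    rw [show (⟨s(j, i), hd⟩ : {e : Sym2 (Fin n) // ¬ e.IsDiag}) =
        ⟨s(i, j), he ▸ hd⟩ from Subtype.ext he]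
    exact h _
  loopless := ⟨fun i h => h.1 rfl⟩

noncomputable instance (n : ℕ) : MeasurableSpace (SimpleGraph (Fin n)) := ⊤

/-- The Erdős–Rényi random graph measure on `SimpleGraph (Fin n)`. -/
noncomputable def erdosRenyi (n : ℕ) (p : ℝ) : Measure (SimpleGraph (Fin n)) :=
  Measure.map graphOfFlags
    (Measure.pi fun _ : {e : Sym2 (Fin n) // ¬ e.IsDiag} =>
      (PMF.bernoulli (min (Real.toNNReal p) 1) (min_le_right _ _)).toMeasure)

/-!
First moment method. Every cycle subgraph of `G(n, p)` of length `k ≤ K := ⌊log n / (2ε)⌋`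
is traced by a cycle of the complete graph all of whose `k` edges are present, which happens
with probability `p ^ k`; a closed walk of length `k` is determined by the last `k` entries
of its support, so there are at most `n ^ k` of them. Hence the expected number of short
cycles is at most `∑_{k ≤ K} (np)^k ≤ (K + 1) √n`, as `(1 + ε)^k ≤ e^{εk} ≤ √n` for `k ≤ K`,
and Markov's inequality bounds the probability of more than `n^{3/4}` of them by
`O(log n · n^{-1/4})`.
-/

open scoped ENNReal
open Finset

namespace SimpleGraph

variable {V : Type*} {G : SimpleGraph V}

noncomputable def shortCycleCount (G : SimpleGraph V) (L : ℝ) : ℕ :=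
  Nat.card {H : G.Subgraph //
    ∃ (v : V) (w : G.Walk v v), w.IsCycle ∧ (w.length : ℝ) ≤ L ∧ w.toSubgraph = H}

lemma Walk.sigma_eq_of_support_tail_eq {u v : V} {p : G.Walk u u} {q : G.Walk v v}
    (hp : ¬ p.Nil) (hq : ¬ q.Nil) (h : p.support.tail = q.support.tail) :
    (⟨u, p⟩ : Σ v, G.Walk v v) = ⟨v, q⟩ := by
  have huv : u = v := by
    have hu := p.tail.getLast_support
    have hv := q.tail.getLast_support
    simp only [Walk.support_tail_of_not_nil _ hp, Walk.support_tail_of_not_nil _ hq, h] at hu hv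
    exact hu.symm.trans hv
  subst huv
  rw [Walk.ext_support (p := p) (q := q)
    (by rw [← p.cons_tail_support, ← q.cons_tail_support, h])]

lemma Walk.IsCycle.length_le_floor_iff {v : V} {w : G.Walk v v} (hw : w.IsCycle) {L : ℝ} :
    w.length ≤ ⌊L⌋₊ ↔ (w.length : ℝ) ≤ L :=
  Nat.le_floor_iff' (by have := hw.three_le_length; omega)

lemma card_le_pow_of_closedWalks_length_eq [Fintype V] {k : ℕ} {s : Finset (Σ v, G.Walk v v)}
    (hs : ∀ w ∈ s, ¬ w.2.Nil ∧ w.2.length = k) : #s ≤ Fintype.card V ^ k := by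
  have hlen : ∀ w ∈ s, w.2.support.tail.length = k := fun w hw => by
    simp [(hs w hw).2]
  calc #s = Fintype.card s := (Fintype.card_coe s).symm
    _ ≤ Fintype.card (List.Vector V k) :=
        Fintype.card_le_of_injective (fun w => ⟨w.1.2.support.tail, hlen w.1 w.2⟩)
          fun w w' h => Subtype.ext <| Walk.sigma_eq_of_support_tail_eq (hs w.1 w.2).1
            (hs w'.1 w'.2).1 (congrArg Subtype.val h)
    _ = Fintype.card V ^ k := card_vector k

section CycleFinset

variable [Fintype V] [DecidableEq V] [DecidableRel G.Adj]

open Classical in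
noncomputable def cycleFinset (G : SimpleGraph V) [DecidableRel G.Adj] (K : ℕ) :
    Finset (Σ v, G.Walk v v) :=
  {w ∈ univ.sigma fun v => G.finsetWalkLengthLT (K + 1) v v | w.2.IsCycle}

lemma mem_cycleFinset {K : ℕ} {w : Σ v, G.Walk v v} :
    w ∈ G.cycleFinset K ↔ w.2.IsCycle ∧ w.2.length ≤ K := by
  simp [cycleFinset, mem_finsetWalkLengthLT_iff, and_comm]

lemma sum_cycleFinset_pow_le (K : ℕ) (x : ℝ≥0∞) :
    ∑ w ∈ G.cycleFinset K, x ^ w.2.length ≤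
      ∑ k ∈ range (K + 1), (Fintype.card V * x) ^ k := by
  rw [← sum_fiberwise_of_maps_to (g := fun w => w.2.length) (t := range (K + 1))
    fun w hw => mem_range_succ_iff.2 (mem_cycleFinset.1 hw).2]
  gcongr with k
  calc ∑ w ∈ G.cycleFinset K with w.2.length = k, x ^ w.2.length
      = #{w ∈ G.cycleFinset K | w.2.length = k} * x ^ k := by
        rw [sum_congr rfl fun w hw => by rw [(mem_filter.1 hw).2], sum_const, nsmul_eq_mul]
    _ ≤ (Fintype.card V ^ k : ℕ) * x ^ k := by
        gcongr
        refine card_le_pow_of_closedWalks_length_eq fun w hw => ?_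
        obtain ⟨hw, hk⟩ := mem_filter.1 hw
        exact ⟨(mem_cycleFinset.1 hw).1.not_nil, hk⟩
    _ = (Fintype.card V * x) ^ k := by push_cast; ring

end CycleFinset

open Classical in
lemma shortCycleCount_le_card_filter [Fintype V] [DecidableEq V] (G : SimpleGraph V) (L : ℝ) :
    G.shortCycleCount L ≤
      #{w ∈ (⊤ : SimpleGraph V).cycleFinset ⌊L⌋₊ | ∀ e ∈ w.2.edges, e ∈ G.edgeSet} := by
  set T := {w ∈ (⊤ : SimpleGraph V).cycleFinset ⌊L⌋₊ | ∀ e ∈ w.2.edges, e ∈ G.edgeSet}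
  have hT : ∀ w ∈ T, w.2.IsCycle ∧ w.2.length ≤ ⌊L⌋₊ := fun w hw =>
    mem_cycleFinset.1 (mem_filter.1 hw).1
  rw [← Fintype.card_coe, ← Nat.card_eq_fintype_card]
  refine Nat.card_le_card_of_surjective
    (fun w => ⟨(w.1.2.transfer G (mem_filter.1 w.2).2).toSubgraph, w.1.1, _,
      (hT w.1 w.2).1.transfer _, ?_, rfl⟩) ?_
  · rw [Walk.length_transfer, ← (hT w.1 w.2).1.length_le_floor_iff]
    exact (hT w.1 w.2).2
  · rintro ⟨_, v, w, hw, hlen, rfl⟩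
    have hedges : ∀ e ∈ w.edges, e ∈ (⊤ : SimpleGraph V).edgeSet :=
      fun e he => edgeSet_mono le_top (w.edges_subset_edgeSet he)
    refine ⟨⟨⟨v, w.transfer ⊤ hedges⟩, mem_filter.2 ⟨mem_cycleFinset.2
      ⟨hw.transfer hedges, ?_⟩, by simpa using w.edges_subset_edgeSet⟩⟩, ?_⟩
    · rwa [Walk.length_transfer, hw.length_le_floor_iff]
    · simp only [Walk.transfer_transfer, Walk.transfer_self]

end SimpleGraph

lemma MeasureTheory.lintegral_card_filter {α β : Type*} [MeasurableSpace α] (μ : Measure α)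
    (s : Finset β) (P : α → β → Prop) [∀ a, DecidablePred (P a)]
    (hP : ∀ b ∈ s, MeasurableSet {a | P a b}) :
    ∫⁻ a, (#{b ∈ s | P a b} : ℝ≥0∞) ∂μ = ∑ b ∈ s, μ {a | P a b} := by
  have hcard : ∀ a, (#{b ∈ s | P a b} : ℝ≥0∞) = ∑ b ∈ s, {a | P a b}.indicator 1 a :=
    fun a => by
      rw [card_filter, Nat.cast_sum]
      exact sum_congr rfl fun b _ => by by_cases h : P a b <;> simp [h]
  simp_rw [hcard]
  rw [lintegral_finsetSum' _ fun b hb => (measurable_one.indicator (hP b hb)).aemeasurable]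
  exact sum_congr rfl fun b hb => lintegral_indicator_one (hP b hb)

instance (n : ℕ) (p : ℝ) : IsProbabilityMeasure (erdosRenyi n p) :=
  Measure.isProbabilityMeasure_map (measurable_of_finite _).aemeasurable

lemma mem_edgeSet_graphOfFlags {n : ℕ} (χ : {e : Sym2 (Fin n) // ¬ e.IsDiag} → Bool)
    (e : {e : Sym2 (Fin n) // ¬ e.IsDiag}) : e.1 ∈ (graphOfFlags χ).edgeSet ↔ χ e = true := by
  obtain ⟨e, he⟩ := e
  induction e using Sym2.ind with
  | h i j =>
    exact ⟨fun h => h.2 he, fun h => ⟨fun hij => he (Sym2.mk_isDiag_iff.2 hij), fun _ => h⟩⟩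

lemma erdosRenyi_setOf_subset_edgeSet (n : ℕ) (p : ℝ) (s : Finset (Sym2 (Fin n)))
    (hs : ∀ e ∈ s, ¬ e.IsDiag) :
    erdosRenyi n p {G | ↑s ⊆ G.edgeSet} = (min p.toNNReal 1 : NNReal) ^ #s := by
  have hpre : graphOfFlags ⁻¹' {G | ↑s ⊆ G.edgeSet} =
      (↑(s.subtype fun e => ¬ e.IsDiag) : Set {e : Sym2 (Fin n) // ¬ e.IsDiag}).pi
        fun _ => {true} := by
    ext χ
    simp only [Set.mem_preimage, Set.mem_ofPred_eq, Set.subset_def, Set.mem_pi, mem_coe,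
      mem_subtype, Set.mem_singleton_iff, ← mem_edgeSet_graphOfFlags]
    exact ⟨fun h e he => h e.1 he, fun h e he => h ⟨e, hs e he⟩ he⟩
  rw [erdosRenyi, Measure.map_apply (measurable_of_finite _) MeasurableSpace.measurableSet_top,
    hpre, Measure.pi_pi_finset, prod_const, card_subtype, filter_true_of_mem hs,
    PMF.toMeasure_apply_singleton _ _ (measurableSet_singleton _)]
  rfl

open SimpleGraph in
lemma lintegral_shortCycleCount_erdosRenyi_le (n : ℕ) (p L : ℝ) :
    ∫⁻ G, (G.shortCycleCount L : ℝ≥0∞) ∂erdosRenyi n p ≤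
      ∑ k ∈ range (⌊L⌋₊ + 1), ENNReal.ofReal (n * p) ^ k := by
  classical
  set q : ℝ≥0∞ := ((min p.toNNReal 1 : NNReal) : ℝ≥0∞)
  have hprob : ∀ w ∈ (⊤ : SimpleGraph (Fin n)).cycleFinset ⌊L⌋₊,
      erdosRenyi n p {G | ∀ e ∈ w.2.edges, e ∈ G.edgeSet} = q ^ w.2.length := fun w hw => by
    have hc := (mem_cycleFinset.1 hw).1
    have hset : {G : SimpleGraph (Fin n) | ∀ e ∈ w.2.edges, e ∈ G.edgeSet} =
        {G | ↑w.2.edges.toFinset ⊆ G.edgeSet} := by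
      simp [Set.subset_def]
    rw [hset, erdosRenyi_setOf_subset_edgeSet, List.toFinset_card_of_nodup hc.edges_nodup,
      Walk.length_edges]
    exact fun e he =>
      not_isDiag_of_mem_edgeSet _ (w.2.edges_subset_edgeSet (List.mem_toFinset.1 he))
  have hnq : (n : ℝ≥0∞) * q ≤ ENNReal.ofReal (n * p) := by
    rw [ENNReal.ofReal_mul n.cast_nonneg, ENNReal.ofReal_natCast]
    gcongr
    exact ENNReal.coe_le_coe.2 (min_le_left _ _)
  calc ∫⁻ G, (G.shortCycleCount L : ℝ≥0∞) ∂erdosRenyi n p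
      ≤ ∫⁻ G, (#{w ∈ (⊤ : SimpleGraph (Fin n)).cycleFinset ⌊L⌋₊ |
          ∀ e ∈ w.2.edges, e ∈ G.edgeSet} : ℝ≥0∞) ∂erdosRenyi n p :=
        lintegral_mono fun G => Nat.cast_le.2 (by convert G.shortCycleCount_le_card_filter L)
    _ = ∑ w ∈ (⊤ : SimpleGraph (Fin n)).cycleFinset ⌊L⌋₊,
          erdosRenyi n p {G | ∀ e ∈ w.2.edges, e ∈ G.edgeSet} :=
        lintegral_card_filter _ _ _ fun _ _ => MeasurableSpace.measurableSet_top
    _ = ∑ w ∈ (⊤ : SimpleGraph (Fin n)).cycleFinset ⌊L⌋₊, q ^ w.2.length := sum_congr rfl hprob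
    _ ≤ ∑ k ∈ range (⌊L⌋₊ + 1), ((n : ℝ≥0∞) * q) ^ k := by
        simpa using sum_cycleFinset_pow_le (G := (⊤ : SimpleGraph (Fin n))) ⌊L⌋₊ q
    _ ≤ ∑ k ∈ range (⌊L⌋₊ + 1), ENNReal.ofReal (n * p) ^ k := by gcongr

lemma one_add_pow_le_sqrt {ε x : ℝ} (hε : 0 < ε) (hx : 0 < x) {K : ℕ}
    (hK : (K : ℝ) ≤ Real.log x / (2 * ε)) : (1 + ε) ^ K ≤ √x :=
  calc (1 + ε) ^ K ≤ Real.exp ε ^ K := by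
        gcongr
        linarith [Real.add_one_le_exp ε]
    _ = Real.exp (K * ε) := (Real.exp_nat_mul ε K).symm
    _ ≤ Real.exp (Real.log x / 2) := by
        gcongr
        calc (K : ℝ) * ε ≤ Real.log x / (2 * ε) * ε := by gcongr
          _ = Real.log x / 2 := by field_simp
    _ = √x := by rw [Real.sqrt_eq_rpow, Real.rpow_def_of_pos hx]; ring_nf

lemma sum_range_one_add_pow_le {ε x : ℝ} (hε : 0 < ε) (hx : 1 ≤ x) :
    ∑ k ∈ range (⌊Real.log x / (2 * ε)⌋₊ + 1), (1 + ε) ^ k ≤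
      (Real.log x / (2 * ε) + 1) * √x := by
  have hL : 0 ≤ Real.log x / (2 * ε) := by have := Real.log_nonneg hx; positivity
  calc ∑ k ∈ range (⌊Real.log x / (2 * ε)⌋₊ + 1), (1 + ε) ^ k
      ≤ #(range (⌊Real.log x / (2 * ε)⌋₊ + 1)) • √x := by
        refine sum_le_card_nsmul _ _ _ fun k hk => one_add_pow_le_sqrt hε (by linarith) ?_
        exact (Nat.cast_le.2 (mem_range_succ_iff.1 hk)).trans (Nat.floor_le hL)
    _ ≤ (Real.log x / (2 * ε) + 1) * √x := by
        rw [card_range, nsmul_eq_mul, Nat.cast_succ]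
        gcongr
        exact Nat.floor_le hL

lemma tendsto_log_add_one_mul_sqrt_div_rpow (c : ℝ) :
    Tendsto (fun x : ℝ => (Real.log x / c + 1) * √x / x ^ (3 / 4 : ℝ)) atTop (nhds 0) := by
  have hlog : Tendsto (fun x : ℝ => Real.log x / x ^ (1 / 4 : ℝ)) atTop (nhds 0) :=
    (isLittleO_log_rpow_atTop (by norm_num)).tendsto_div_nhds_zero
  have hinv : Tendsto (fun x : ℝ => (x ^ (1 / 4 : ℝ))⁻¹) atTop (nhds 0) :=
    tendsto_inv_atTop_zero.comp (tendsto_rpow_atTop (by norm_num))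
  have hsum := (hlog.div_const c).add hinv
  rw [zero_div, zero_add] at hsum
  refine hsum.congr' ?_
  filter_upwards [eventually_gt_atTop 0] with x hx
  have hsqrt : √x / x ^ (3 / 4 : ℝ) = (x ^ (1 / 4 : ℝ))⁻¹ := by
    rw [Real.sqrt_eq_rpow, ← Real.rpow_sub hx, ← Real.rpow_neg hx.le]
    norm_num
  rw [mul_div_assoc, hsqrt]
  ring

lemma erdosRenyi_compl_shortCycleCount_le {ε : ℝ} (hε : 0 < ε) {n : ℕ} (hn : 1 ≤ n) :
    erdosRenyi n ((1 + ε) / n)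
        {G | (G.shortCycleCount (Real.log n / (2 * ε)) : ℝ) ≤ (n : ℝ) ^ (3 / 4 : ℝ)}ᶜ ≤
      ENNReal.ofReal ((Real.log n / (2 * ε) + 1) * √n / (n : ℝ) ^ (3 / 4 : ℝ)) := by
  set L := Real.log n / (2 * ε)
  set t := (n : ℝ) ^ (3 / 4 : ℝ)
  have hn' : (1 : ℝ) ≤ n := Nat.one_le_cast.2 hn
  have ht : 0 < t := by positivity
  have hnp : (n : ℝ) * ((1 + ε) / n) = 1 + ε := by field_simp
  calc erdosRenyi n ((1 + ε) / n) {G | (G.shortCycleCount L : ℝ) ≤ t}ᶜ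
      ≤ erdosRenyi n ((1 + ε) / n) {G | ENNReal.ofReal t ≤ G.shortCycleCount L} :=
        measure_mono fun G hG =>
          (ENNReal.ofReal_le_ofReal (le_of_not_ge hG)).trans_eq (ENNReal.ofReal_natCast _)
    _ ≤ (∫⁻ G, (G.shortCycleCount L : ℝ≥0∞) ∂erdosRenyi n ((1 + ε) / n)) / ENNReal.ofReal t :=
        meas_ge_le_lintegral_div (measurable_of_finite _).aemeasurable
          (ENNReal.ofReal_pos.2 ht).ne' ENNReal.ofReal_ne_top
    _ ≤ ENNReal.ofReal (∑ k ∈ range (⌊L⌋₊ + 1), (1 + ε) ^ k) / ENNReal.ofReal t := by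
        gcongr
        refine (lintegral_shortCycleCount_erdosRenyi_le n _ L).trans_eq ?_
        rw [ENNReal.ofReal_sum_of_nonneg fun k _ => by positivity, hnp]
        simp_rw [ENNReal.ofReal_pow (by linarith : (0 : ℝ) ≤ 1 + ε)]
    _ ≤ ENNReal.ofReal ((L + 1) * √n) / ENNReal.ofReal t := by
        gcongr
        exact sum_range_one_add_pow_le hε hn'
    _ = ENNReal.ofReal ((L + 1) * √n / t) := (ENNReal.ofReal_div_of_pos ht).symm

/-- For fixed `ε > 0` and `p = (1+ε)/n`, whp the random graph `G(n,p)` contains at most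
`n^{3/4}` cycle subgraphs of length at most `(log n)/(2ε)`. -/
theorem stmt9 (ε : ℝ) (hε : 0 < ε) :
    Tendsto
      (fun n : ℕ =>
        erdosRenyi n ((1 + ε) / n)
          {G : SimpleGraph (Fin n) |
            (Nat.card {H : G.Subgraph //
                ∃ (v : Fin n) (w : G.Walk v v), w.IsCycle ∧
                  (w.length : ℝ) ≤ Real.log n / (2 * ε) ∧ w.toSubgraph = H} : ℝ) ≤
              (n : ℝ) ^ ((3 : ℝ) / 4)})
      atTop (nhds 1) := by
  set S := fun n : ℕ => {G : SimpleGraph (Fin n) |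
    (G.shortCycleCount (Real.log n / (2 * ε)) : ℝ) ≤ (n : ℝ) ^ (3 / 4 : ℝ)}
  change Tendsto (fun n : ℕ => erdosRenyi n ((1 + ε) / n) (S n)) atTop (nhds 1)
  have hbound : Tendsto (fun n : ℕ => ENNReal.ofReal
      ((Real.log n / (2 * ε) + 1) * √n / (n : ℝ) ^ (3 / 4 : ℝ))) atTop (nhds 0) := by
    simpa using ENNReal.tendsto_ofReal
      ((tendsto_log_add_one_mul_sqrt_div_rpow (2 * ε)).comp tendsto_natCast_atTop_atTop)
  have hbad : Tendsto (fun n : ℕ => erdosRenyi n ((1 + ε) / n) (S n)ᶜ) atTop (nhds 0) :=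
    tendsto_of_tendsto_of_tendsto_of_le_of_le' tendsto_const_nhds hbound
      (Eventually.of_forall fun _ => bot_le)
      ((eventually_ge_atTop 1).mono fun _ hn => erdosRenyi_compl_shortCycleCount_le hε hn)
  have hgood := ENNReal.Tendsto.sub tendsto_const_nhds hbad (Or.inl ENNReal.one_ne_top)
  rw [tsub_zero] at hgood
  refine hgood.congr fun n => ?_
  rw [← prob_compl_eq_one_sub MeasurableSpace.measurableSet_top, compl_compl]
end

section
/- Let G be a finite simple graph on n vertices with maximum degree Δ ≥ 1, and let s be a positive integer. Then the number of vertex subsets S of G with |S| = s such that the induced subgraph G[S] is connected is at most n·(e·Δ)^s, where e is Euler's number. -/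
/-!
Breadth-first search from a vertex `v` inside a connected set `S` of size `s` lists all of `S`,
and the search is determined by `v` together with the set of pairs `(i, k)` such that the `k`-th
neighbour of the `i`-th listed vertex is discovered from it. These are `s - 1` pairs in
`[0, s) × [0, Δ)`, so there are at most `n · C(sΔ, s - 1)` connected sets of size `s`, and
`C(sΔ, s - 1) ≤ (sΔ)^(s-1) / (s-1)! ≤ Δ^s e^s`.
-/

open Finset

section GrowList

variable {α : Type*}

def growList (a : α) (step : List α → ℕ → List α) : ℕ → List α
  | 0 => [a]
  | i + 1 => growList a step i ++ step (growList a step i) i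

variable (a : α) (step : List α → ℕ → List α)

@[simp] lemma growList_zero : growList a step 0 = [a] := rfl


lemma growList_succ (i : ℕ) :
    growList a step (i + 1) = growList a step i ++ step (growList a step i) i := rfl

lemma growList_prefix_of_le {i j : ℕ} (h : i ≤ j) : growList a step i <+: growList a step j := by
  induction j, h using Nat.le_induction with
  | base => exact List.prefix_refl _
  | succ j _ ih => exact ih.trans (List.prefix_append _ _)

lemma length_growList (i : ℕ) :
    (growList a step i).length = 1 + ∑ j ∈ range i, (step (growList a step j) j).length := by
  induction i with
  | zero => simp
  | succ i ih => rw [growList_succ, List.length_append, ih, sum_range_succ, add_assoc]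

lemma growList_congr {step' : List α → ℕ → List α} {i : ℕ}
    (h : ∀ j < i, step (growList a step j) j = step' (growList a step j) j) :
    growList a step i = growList a step' i := by
  induction i with
  | zero => rfl
  | succ i ih =>
    have ih := ih fun j hj => h j (Nat.lt_succ_of_lt hj)
    rw [growList_succ, growList_succ, h i (Nat.lt_succ_self i), ih]

end GrowList

namespace Finset

variable {α β : Type*} [DecidableEq α] [DecidableEq β]

def row (F : Finset (α × β)) (a : α) : Finset β := (F.filter (·.1 = a)).image Prod.snd

@[simp] lemma mem_row {F : Finset (α × β)} {a : α} {b : β} : b ∈ F.row a ↔ (a, b) ∈ F := by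
  simp [row]

lemma exists_mem_powersetCard_row_eq (s : Finset α) (t : Finset β) (A : α → Finset β)
    (hA : ∀ a ∈ s, A a ⊆ t) :
    ∃ F ∈ (s ×ˢ t).powersetCard (∑ a ∈ s, #(A a)), ∀ a ∈ s, F.row a = A a := by
  refine ⟨(s ×ˢ t).filter (fun p => p.2 ∈ A p.1), mem_powersetCard.2 ⟨filter_subset _ _, ?_⟩,
    fun a ha => ?_⟩
  · rw [card_filter, sum_product]
    refine sum_congr rfl fun a ha => ?_
    dsimp only
    rw [← card_filter, filter_mem_eq_inter, inter_eq_right.2 (hA a ha)]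
  · ext b
    simp only [mem_row, mem_filter, mem_product, and_iff_right_iff_imp]
    exact fun hb => ⟨ha, hA a ha hb⟩

lemma idxOf_toList_lt_card {t : Finset α} {a : α} (h : a ∈ t) : t.toList.idxOf a < #t := by
  rw [← length_toList]
  exact List.idxOf_lt_length_iff.2 (mem_toList.2 h)

lemma injOn_idxOf_toList (t : Finset α) : Set.InjOn t.toList.idxOf t :=
  fun _ ha _ _ h => (List.idxOf_inj (mem_toList.2 ha)).1 h

lemma filter_idxOf_toList_mem_image {t u : Finset α} (h : u ⊆ t) :
    t.filter (fun a => t.toList.idxOf a ∈ u.image t.toList.idxOf) = u := by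
  ext a
  simp only [mem_filter, mem_image]
  constructor
  · rintro ⟨ha, b, hb, hab⟩
    rwa [← t.injOn_idxOf_toList (h hb) ha hab]
  · exact fun ha => ⟨h ha, a, ha, rfl⟩

end Finset

namespace SimpleGraph

variable {V : Type*} (G : SimpleGraph V)

lemma mem_of_connected_induce {s t : Set V} (hconn : (G.induce s).Connected) {v : V}
    (hv : v ∈ s) (hvt : v ∈ t) (hclosed : ∀ x ∈ t, ∀ y ∈ s, G.Adj x y → y ∈ t) :
    ∀ w ∈ s, w ∈ t := by
  suffices ∀ x : s, Relation.ReflTransGen (G.induce s).Adj ⟨v, hv⟩ x → (x : V) ∈ t from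
    fun w hw => this ⟨w, hw⟩ ((reachable_iff_reflTransGen _ _).1 (hconn.preconnected _ _))
  intro x hx
  induction hx with
  | refl => exact hvt
  | tail _ hadj ih => exact hclosed _ ih _ (Subtype.prop _) hadj

variable [Fintype V] [DecidableEq V] [DecidableRel G.Adj]

noncomputable def nbrIndex (u : V) : V → ℕ := (G.neighborFinset u).toList.idxOf

noncomputable def bfsStep (S : Finset V) (L : List V) (i : ℕ) : List V :=
  if h : i < L.length then ((G.neighborFinset L[i] ∩ S) \ L.toFinset).toList else []

noncomputable def bfs (S : Finset V) (v : V) : ℕ → List V := growList v (G.bfsStep S)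

noncomputable def bfsCode (S : Finset V) (v : V) (i : ℕ) : Finset ℕ :=
  let L := G.bfs S v i
  if h : i < L.length then ((G.neighborFinset L[i] ∩ S) \ L.toFinset).image (G.nbrIndex L[i])
  else ∅

noncomputable def decodeStep (A : ℕ → Finset ℕ) (L : List V) (i : ℕ) : List V :=
  if h : i < L.length then
    ((G.neighborFinset L[i]).filter (fun w => G.nbrIndex L[i] w ∈ A i)).toList
  else []

noncomputable def decode (v : V) (A : ℕ → Finset ℕ) : ℕ → List V := growList v (G.decodeStep A)

variable {S : Finset V} {v : V}

lemma bfs_succ (i : ℕ) : G.bfs S v (i + 1) = G.bfs S v i ++ G.bfsStep S (G.bfs S v i) i := rfl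

lemma bfs_prefix_of_le {i j : ℕ} (h : i ≤ j) : G.bfs S v i <+: G.bfs S v j :=
  growList_prefix_of_le v _ h

lemma nodup_bfs_and_subset (hv : v ∈ S) (i : ℕ) :
    (G.bfs S v i).Nodup ∧ ∀ w ∈ G.bfs S v i, w ∈ S := by
  induction i with
  | zero => simpa [bfs] using hv
  | succ i ih =>
    obtain ⟨hnodup, hsub⟩ := ih
    rw [G.bfs_succ, bfsStep]
    split_ifs
    · refine ⟨List.nodup_append.2 ⟨hnodup, nodup_toList _, ?_⟩, ?_⟩
      · intro x hx y hy hxy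
        simp only [mem_toList, mem_sdiff, List.mem_toFinset] at hy
        exact hy.2 (hxy ▸ hx)
      · simp only [List.mem_append, mem_toList, mem_sdiff, mem_inter]
        rintro w (hw | hw)
        exacts [hsub w hw, hw.1.2]
    · simpa using ⟨hnodup, hsub⟩

lemma length_bfs_le_card (hv : v ∈ S) (i : ℕ) : (G.bfs S v i).length ≤ #S := by
  obtain ⟨hnodup, hsub⟩ := G.nodup_bfs_and_subset hv i
  rw [← List.toFinset_card_of_nodup hnodup]
  exact card_le_card fun w hw => hsub w (List.mem_toFinset.1 hw)

lemma bfs_eq_of_length_le {i j : ℕ} (h : (G.bfs S v i).length ≤ i) (hij : i ≤ j) :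
    G.bfs S v j = G.bfs S v i := by
  induction j, hij using Nat.le_induction with
  | base => rfl
  | succ j hij ih => rw [G.bfs_succ, ih, bfsStep, dif_neg (by omega), List.append_nil]

lemma lt_length_bfs_self {p m : ℕ} (hpm : p ≤ m) (hp : p < (G.bfs S v m).length) :
    p < (G.bfs S v p).length := by
  by_contra! h
  rw [G.bfs_eq_of_length_le h hpm] at hp
  omega

lemma mem_bfs_succ_of_adj {p : ℕ} (hp : p < (G.bfs S v p).length) {w : V}
    (hadj : G.Adj (G.bfs S v p)[p] w) (hw : w ∈ S) : w ∈ G.bfs S v (p + 1) := by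
  rw [G.bfs_succ, bfsStep, dif_pos hp, List.mem_append]
  by_cases hwL : w ∈ G.bfs S v p
  · exact Or.inl hwL
  · exact Or.inr (by simpa [hw, hwL] using hadj)

lemma mem_bfs_of_adj (hv : v ∈ S) {i : ℕ} (hcard : #S ≤ i) {x y : V} (hx : x ∈ G.bfs S v i)
    (hy : y ∈ S) (hadj : G.Adj x y) : y ∈ G.bfs S v i := by
  obtain ⟨p, hp, rfl⟩ := List.getElem_of_mem hx
  have hpi : p < i := hp.trans_le ((G.length_bfs_le_card hv i).trans hcard)
  have hpp := G.lt_length_bfs_self hpi.le hp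
  rw [← (G.bfs_prefix_of_le hpi.le).getElem hpp] at hadj
  exact (G.bfs_prefix_of_le hpi).subset (G.mem_bfs_succ_of_adj hpp hadj hy)

lemma toFinset_bfs (hv : v ∈ S) (hconn : (G.induce (S : Set V)).Connected) {i : ℕ}
    (hcard : #S ≤ i) : (G.bfs S v i).toFinset = S := by
  refine Subset.antisymm (fun w hw => (G.nodup_bfs_and_subset hv i).2 w (List.mem_toFinset.1 hw))
    fun w hw => List.mem_toFinset.2 ?_
  refine G.mem_of_connected_induce hconn hv (t := {w | w ∈ G.bfs S v i}) ?_
    (fun x hx y hy hadj => G.mem_bfs_of_adj hv hcard hx hy hadj) w hw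
  exact (G.bfs_prefix_of_le (Nat.zero_le i)).subset (by simp [bfs])

lemma decodeStep_bfsCode (i : ℕ) :
    G.decodeStep (G.bfsCode S v) (G.bfs S v i) i = G.bfsStep S (G.bfs S v i) i := by
  unfold decodeStep bfsStep
  split_ifs with h
  · simp only [bfsCode, dif_pos h]
    unfold nbrIndex
    rw [filter_idxOf_toList_mem_image (sdiff_subset.trans inter_subset_left)]
  · rfl

lemma decode_bfsCode (i : ℕ) : G.decode v (G.bfsCode S v) i = G.bfs S v i :=
  (growList_congr v _ fun j _ => (G.decodeStep_bfsCode (S := S) (v := v) j).symm).symm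

lemma decode_congr {A A' : ℕ → Finset ℕ} {i : ℕ} (h : ∀ j < i, A j = A' j) :
    G.decode v A i = G.decode v A' i :=
  growList_congr v _ fun j hj => by simp only [decodeStep, h j hj]

lemma card_bfsCode (i : ℕ) : #(G.bfsCode S v i) = (G.bfsStep S (G.bfs S v i) i).length := by
  unfold bfsStep
  split_ifs with h
  · simp only [bfsCode, dif_pos h, length_toList]
    exact card_image_of_injOn ((injOn_idxOf_toList _).mono (sdiff_subset.trans inter_subset_left))
  · simp [bfsCode, h]

lemma bfsCode_subset_range (i : ℕ) : G.bfsCode S v i ⊆ range G.maxDegree := by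
  dsimp only [bfsCode]
  split_ifs with h
  · intro k hk
    obtain ⟨w, hw, rfl⟩ := mem_image.1 hk
    exact mem_range.2 <| (idxOf_toList_lt_card (sdiff_subset.trans inter_subset_left hw)).trans_le
      (G.degree_le_maxDegree _)
  · exact empty_subset _

lemma length_bfs (i : ℕ) : (G.bfs S v i).length = 1 + ∑ j ∈ range i, #(G.bfsCode S v j) := by
  simp only [card_bfsCode]
  exact length_growList v _ i

lemma sum_card_bfsCode (hv : v ∈ S) (hconn : (G.induce (S : Set V)).Connected) :
    ∑ i ∈ range #S, #(G.bfsCode S v i) = #S - 1 := by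
  have hlen : (G.bfs S v #S).length = #S := by
    rw [← List.toFinset_card_of_nodup (G.nodup_bfs_and_subset hv _).1,
      G.toFinset_bfs hv hconn le_rfl]
  have := G.length_bfs (S := S) (v := v) #S
  omega

theorem card_connected_le (s : ℕ) :
    #{S : Finset V | #S = s ∧ (G.induce (S : Set V)).Connected} ≤
      Fintype.card V * (s * G.maxDegree).choose (s - 1) := by
  calc _ ≤ #(univ ×ˢ (range s ×ˢ range G.maxDegree).powersetCard (s - 1)) :=
        card_le_card_of_surjOn (fun p => (G.decode p.1 p.2.row s).toFinset) ?_
    _ = _ := by simp [card_powersetCard]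
  intro S hS
  obtain ⟨rfl, hconn⟩ := (mem_filter.1 hS).2
  obtain ⟨⟨v, hv⟩⟩ := hconn.nonempty
  obtain ⟨F, hF, hrow⟩ := exists_mem_powersetCard_row_eq _ _ (G.bfsCode S v)
    fun i _ => G.bfsCode_subset_range i
  rw [G.sum_card_bfsCode hv hconn] at hF
  refine ⟨(v, F), by simpa using hF, ?_⟩
  change (G.decode v F.row #S).toFinset = S
  rw [G.decode_congr fun j hj => hrow j (mem_range.2 hj), decode_bfsCode,
    G.toFinset_bfs hv hconn le_rfl]

end SimpleGraph

lemma Nat.choose_mul_sub_one_le_exp_mul_pow {Δ : ℕ} (hΔ : 1 ≤ Δ) (s : ℕ) :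
    ((s * Δ).choose (s - 1) : ℝ) ≤ (Real.exp 1 * Δ) ^ s := by
  have hexp : (s : ℝ) ^ (s - 1) / (s - 1).factorial ≤ Real.exp 1 ^ s := by
    rw [← Real.exp_nat_mul, mul_one]
    exact Real.pow_div_factorial_le_exp _ s.cast_nonneg _
  have hpow : (Δ : ℝ) ^ (s - 1) ≤ (Δ : ℝ) ^ s :=
    pow_le_pow_right₀ (by exact_mod_cast hΔ) (s.sub_le 1)
  calc ((s * Δ).choose (s - 1) : ℝ)
      ≤ ((s * Δ : ℕ) : ℝ) ^ (s - 1) / (s - 1).factorial := Nat.choose_le_pow_div _ _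
    _ = (Δ : ℝ) ^ (s - 1) * ((s : ℝ) ^ (s - 1) / (s - 1).factorial) := by
        push_cast; rw [mul_pow]; ring
    _ ≤ (Δ : ℝ) ^ s * Real.exp 1 ^ s := by gcongr
    _ = (Real.exp 1 * Δ) ^ s := by ring

theorem stmt10_general {V : Type*} [Fintype V] [DecidableEq V] (G : SimpleGraph V)
    [DecidableRel G.Adj] (n s : ℕ) (hn : Fintype.card V = n)
    (hΔ : 1 ≤ G.maxDegree) :
    (Nat.card {S : Finset V // S.card = s ∧
        (SimpleGraph.induce (↑S : Set V) G).Connected} : ℝ) ≤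
      (n : ℝ) * (Real.exp 1 * (G.maxDegree : ℝ)) ^ s := by
  rw [Nat.card_eq_fintype_card, Fintype.card_subtype]
  calc _ ≤ ((n * (s * G.maxDegree).choose (s - 1) : ℕ) : ℝ) := by
        exact_mod_cast hn ▸ G.card_connected_le s
    _ ≤ _ := by
        push_cast
        exact mul_le_mul_of_nonneg_left (Nat.choose_mul_sub_one_le_exp_mul_pow hΔ s) (by positivity)

/-- The number of vertex subsets `S` of size `s` inducing a connected subgraph of a graph `G`
on `n` vertices with maximum degree `Δ ≥ 1` is at most `n (eΔ)^s`. -/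
theorem stmt10 {V : Type*} [Fintype V] [DecidableEq V] (G : SimpleGraph V)
    [DecidableRel G.Adj] (n s : ℕ) (hn : Fintype.card V = n)
    (hΔ : 1 ≤ G.maxDegree) (hs : 0 < s) :
    (Nat.card {S : Finset V // S.card = s ∧
        (SimpleGraph.induce (↑S : Set V) G).Connected} : ℝ) ≤
      (n : ℝ) * (Real.exp 1 * (G.maxDegree : ℝ)) ^ s :=
  stmt10_general G n s hn hΔ
end

section
/- Let G be a finite simple graph with nonempty vertex set, and suppose that G is not globally rigid in ℝ. Then there exist k ≥ 2 and a partition of the vertex set of G into nonempty sets S_1, …, S_k such that: (i) Σ_{i=1}^k |E(G[S_i])| ≥ |E(G)|/2; and (ii) for every vertex v ∈ S_i and every j ≠ i, v has at most one neighbour in S_j. -/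
open Finset SimpleGraph

theorem exists_surjective_fin_same_fibers {V α : Type*} [Fintype V] (φ : V → α) {a b : V}
    (hab : φ a ≠ φ b) :
    ∃ k, 2 ≤ k ∧ ∃ P : V → Fin k, Function.Surjective P ∧ ∀ v w, P v = P w ↔ φ v = φ w := by
  classical
  let e := Fintype.equivFin (Set.range φ)
  refine ⟨Fintype.card (Set.range φ), ?_, e ∘ Set.rangeFactorization φ,
    e.surjective.comp Set.rangeFactorization_surjective,
    fun v w => e.injective.eq_iff.trans Subtype.ext_iff⟩
  exact Fintype.one_lt_card_iff.mpr
    ⟨⟨φ a, Set.mem_range_self a⟩, ⟨φ b, Set.mem_range_self b⟩, by simpa using hab⟩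

namespace SimpleGraph

variable {V : Type*} [Fintype V] (G : SimpleGraph V)

lemma card_edgeSet_induce [DecidableEq V] [DecidableRel G.Adj] (s : Set V)
    [DecidablePred (· ∈ s)] :
    Nat.card (G.induce s).edgeSet = #(G.edgeFinset ∩ s.toFinset.sym2) := by
  rw [← map_edgeFinset_induce, card_map, edgeFinset_card, Nat.card_eq_fintype_card]

lemma card_filter_isDiag_map_le_sum_card_edgeSet_induce [DecidableRel G.Adj]
    {α ι : Type*} [DecidableEq α] [Fintype ι] (φ : V → α) (P : V → ι)
    (hP : ∀ v w, φ v = φ w → P v = P w) :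
    #{e ∈ G.edgeFinset | (e.map φ).IsDiag} ≤ ∑ i, Nat.card (G.induce (P ⁻¹' {i})).edgeSet := by
  classical
  calc #{e ∈ G.edgeFinset | (e.map φ).IsDiag}
      ≤ #(univ.biUnion fun i => G.edgeFinset ∩ (P ⁻¹' {i}).toFinset.sym2) := by
        refine card_le_card fun e he => ?_
        induction e using Sym2.ind with
        | _ u w =>
          simp only [mem_filter, Sym2.map_mk, Sym2.mk_isDiag_iff] at he
          simp [he.1, hP u w he.2]
    _ ≤ ∑ i, #(G.edgeFinset ∩ (P ⁻¹' {i}).toFinset.sym2) := card_biUnion_le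
    _ = ∑ i, Nat.card (G.induce (P ⁻¹' {i})).edgeSet := by simp only [card_edgeSet_induce]

lemma card_edgeSet_le_card_filter_isDiag_map_add [DecidableRel G.Adj] {α β : Type*}
    [DecidableEq α] [DecidableEq β] (φ : V → α) (ψ : V → β)
    (hcover : ∀ u w, G.Adj u w → φ u = φ w ∨ ψ u = ψ w) :
    Nat.card G.edgeSet ≤
      #{e ∈ G.edgeFinset | (e.map φ).IsDiag} + #{e ∈ G.edgeFinset | (e.map ψ).IsDiag} := by
  classical
  rw [Nat.card_eq_fintype_card, ← edgeFinset_card]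
  refine (card_le_card fun e he => ?_).trans (card_union_le _ _)
  induction e using Sym2.ind with
  | _ u w => simpa [he] using hcover u w (mem_edgeFinset.mp he)

lemma card_adj_fiber_le_one {ι β : Type*} (P : V → ι) (ψ : V → β)
    (hinj : ∀ v w, P v = P w → ψ v = ψ w → v = w)
    (hcover : ∀ u w, G.Adj u w → P u = P w ∨ ψ u = ψ w) (v : V) {j : ι} (hj : j ≠ P v) :
    Nat.card {w : V // P w = j ∧ G.Adj v w} ≤ 1 := by
  rw [Finite.card_le_one_iff_subsingleton]
  refine ⟨fun ⟨w₁, hPw₁, hvw₁⟩ ⟨w₂, hPw₂, hvw₂⟩ =>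
    Subtype.ext (hinj w₁ w₂ (hPw₁.trans hPw₂.symm) ?_)⟩
  have hψ : ∀ w, P w = j → G.Adj v w → ψ v = ψ w := fun w hPw hvw =>
    (hcover v w hvw).resolve_left fun h => hj (hPw ▸ h.symm)
  exact (hψ w₁ hPw₁ hvw₁).symm.trans (hψ w₂ hPw₂ hvw₂)

lemma exists_fin_partition_of_cover [DecidableRel G.Adj] {α β : Type*} [DecidableEq α]
    (φ : V → α) (ψ : V → β) (hinj : ∀ v w, φ v = φ w → ψ v = ψ w → v = w)
    (hcover : ∀ u w, G.Adj u w → φ u = φ w ∨ ψ u = ψ w) {a b : V} (hab : φ a ≠ φ b) :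
    ∃ k, 2 ≤ k ∧ ∃ P : V → Fin k, Function.Surjective P ∧
      #{e ∈ G.edgeFinset | (e.map φ).IsDiag} ≤ ∑ i, Nat.card (G.induce (P ⁻¹' {i})).edgeSet ∧
      ∀ v j, j ≠ P v → Nat.card {w : V // P w = j ∧ G.Adj v w} ≤ 1 := by
  obtain ⟨k, hk, P, hsurj, hPφ⟩ := exists_surjective_fin_same_fibers φ hab
  refine ⟨k, hk, P, hsurj,
    G.card_filter_isDiag_map_le_sum_card_edgeSet_induce φ P fun v w => (hPφ v w).mpr,
    fun v j hj => G.card_adj_fiber_le_one P ψ ?_ ?_ v hj⟩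
  · exact fun v w h => hinj v w ((hPφ v w).mp h)
  · simpa only [hPφ] using hcover

end SimpleGraph

lemma exists_cover_of_not_globallyRigid {V : Type*} {G : SimpleGraph V}
    (h : ¬ GloballyRigid G) :
    ∃ φ ψ : V → ℝ, (∀ v w, φ v = φ w → ψ v = ψ w → v = w) ∧
      (∀ u w, G.Adj u w → φ u = φ w ∨ ψ u = ψ w) ∧ ∃ a b, φ a ≠ φ b ∧ ψ a ≠ ψ b := by
  simp only [GloballyRigid, not_forall] at h
  obtain ⟨f, g, hf, -, hedge, a, b, hab⟩ := h
  refine ⟨f - g, f + g, fun v w h₁ h₂ => hf ?_, fun u w huw => ?_, a, b, ?_, ?_⟩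
  · simp only [Pi.sub_apply, Pi.add_apply] at h₁ h₂
    linarith
  · simp only [Pi.sub_apply, Pi.add_apply]
    rcases abs_eq_abs.mp (hedge u w huw) with h | h
    · exact .inl (by linarith)
    · exact .inr (by linarith)
  · intro h
    simp only [Pi.sub_apply] at h
    exact hab (by rw [show f a - f b = g a - g b by linarith])
  · intro h
    simp only [Pi.add_apply] at h
    exact hab (by rw [show f a - f b = -(g a - g b) by linarith, abs_neg])

theorem stmt16_general {V : Type*} [Fintype V] (G : SimpleGraph V)
    (h : ¬ GloballyRigid G) :
    ∃ (k : ℕ), 2 ≤ k ∧ ∃ P : V → Fin k,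
      Function.Surjective P ∧
      ((Nat.card G.edgeSet : ℝ) / 2 ≤
        ∑ i : Fin k, (Nat.card (SimpleGraph.induce (P ⁻¹' {i}) G).edgeSet : ℝ)) ∧
      (∀ (v : V) (j : Fin k), j ≠ P v →
        Nat.card {w : V // P w = j ∧ G.Adj v w} ≤ 1) := by
  classical
  obtain ⟨φ, ψ, hinj, hcover, a, b, hφ, hψ⟩ := exists_cover_of_not_globallyRigid h
  have hcard := G.card_edgeSet_le_card_filter_isDiag_map_add φ ψ hcover
  wlog hhalf : Nat.card G.edgeSet ≤ 2 * #{e ∈ G.edgeFinset | (e.map φ).IsDiag} generalizing φ ψ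
  · exact this ψ φ (fun v w h₁ h₂ => hinj v w h₂ h₁) (fun u w huw => (hcover u w huw).symm)
      hψ hφ (by omega) (by omega)
  obtain ⟨k, hk, P, hsurj, hinternal, hnbr⟩ :=
    G.exists_fin_partition_of_cover φ ψ hinj hcover hφ
  refine ⟨k, hk, P, hsurj, ?_, hnbr⟩
  rw [div_le_iff₀ two_pos]
  exact_mod_cast (show Nat.card G.edgeSet ≤ _ * 2 by omega)

/-- If a finite graph with nonempty vertex set is not globally rigid in ℝ, then its vertex set
has a partition into `k ≥ 2` nonempty blocks (the fibers of a surjection onto `Fin k`) such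
that (i) at least half of the edges lie inside blocks, and (ii) every vertex has at most one
neighbour in each block other than its own. -/
theorem stmt16 {V : Type*} [Fintype V] [Nonempty V] (G : SimpleGraph V)
    (h : ¬ GloballyRigid G) :
    ∃ (k : ℕ), 2 ≤ k ∧ ∃ P : V → Fin k,
      Function.Surjective P ∧
      ((Nat.card G.edgeSet : ℝ) / 2 ≤
        ∑ i : Fin k, (Nat.card (SimpleGraph.induce (P ⁻¹' {i}) G).edgeSet : ℝ)) ∧
      (∀ (v : V) (j : Fin k), j ≠ P v →
        Nat.card {w : V // P w = j ∧ G.Adj v w} ≤ 1) :=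
  stmt16_general G h
end

section
/- Let k be a positive integer. Define f : ({0,1}^k) → ℝ by f(a) = Σ_{i=0}^{k−1} a_i·3^i, and for each j ∈ {0, …, k−1} define f_j : ({0,1}^k) → ℝ by f_j(a) = Σ_{i=0}^{k−1} (1 − 2·𝟙[i=j])·a_i·3^i. Then for every j ∈ {0, …, k−1} and all a, b ∈ {0,1}^k such that a_j ≠ b_j and a, b differ in at least two coordinates, one has |f(a) − f(b)| ≠ |f_j(a) − f_j(b)|. -/
lemma geo_lt (N : ℕ) : ∑ n ∈ Finset.range N, (3:ℤ)^n < 3^N := by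
  induction N with
  | zero => simp
  | succ n ih =>
    rw [Finset.sum_range_succ, pow_succ]
    nlinarith [pow_pos (by norm_num : (0:ℤ) < 3) n]

lemma aux_sum_ne_zero (k : ℕ) (s : Finset (Fin k)) (d : Fin k → ℤ)
    (hd : ∀ i, |d i| ≤ 1) (m : Fin k) (hm : m ∈ s) (hdm : d m ≠ 0) :
    ∑ i ∈ s, d i * 3 ^ (i : ℕ) ≠ 0 := by
  set t := s.filter (fun i => d i ≠ 0) with ht
  have hsum : ∑ i ∈ s, d i * 3 ^ (i : ℕ) = ∑ i ∈ t, d i * 3 ^ (i : ℕ) := by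
    rw [ht, Finset.sum_filter_of_ne]
    intro i _ h h0
    exact h (by rw [h0, zero_mul])
  have hne : t.Nonempty := ⟨m, Finset.mem_filter.2 ⟨hm, hdm⟩⟩
  set M := t.max' hne with hM
  have hMt : M ∈ t := t.max'_mem hne
  have hdM : d M ≠ 0 := (Finset.mem_filter.1 hMt).2
  have habsM : |d M| = 1 := by
    have h1 := hd M
    rcases abs_le.1 h1 with ⟨h2, h3⟩
    rcases lt_or_gt_of_ne hdM with h | h
    · have : d M = -1 := by omega
      simp [this]
    · have : d M = 1 := by omega
      simp [this]
  have hrest : |∑ i ∈ t.erase M, d i * 3 ^ (i : ℕ)| < 3 ^ (M : ℕ) := by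
    calc |∑ i ∈ t.erase M, d i * 3 ^ (i : ℕ)|
        ≤ ∑ i ∈ t.erase M, |d i * 3 ^ (i : ℕ)| := Finset.abs_sum_le_sum_abs _ _
      _ ≤ ∑ i ∈ t.erase M, (3:ℤ) ^ (i : ℕ) := by
          apply Finset.sum_le_sum
          intro i _
          rw [abs_mul, abs_pow]
          calc |d i| * |(3:ℤ)| ^ (i:ℕ) ≤ 1 * |(3:ℤ)| ^ (i:ℕ) := by
                apply mul_le_mul_of_nonneg_right (hd i) (by positivity)
            _ = 3 ^ (i:ℕ) := by norm_num
      _ = ∑ n ∈ (t.erase M).image Fin.val, (3:ℤ) ^ n := by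
          rw [Finset.sum_image]
          intro x _ y _ h
          exact Fin.val_injective h
      _ ≤ ∑ n ∈ Finset.range (M : ℕ), (3:ℤ) ^ n := by
          apply Finset.sum_le_sum_of_subset_of_nonneg
          · intro n hn
            simp only [Finset.mem_image] at hn
            obtain ⟨i, hi, rfl⟩ := hn
            have hiM : i ≠ M := (Finset.mem_erase.1 hi).1
            have hle : i ≤ M := t.le_max' i (Finset.mem_erase.1 hi).2
            exact Finset.mem_range.2 (Fin.lt_def.1 (lt_of_le_of_ne hle hiM))
          · intro n _ _; positivity
      _ < 3 ^ (M : ℕ) := geo_lt _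
  rw [hsum, ← Finset.add_sum_erase t _ hMt]
  intro h0
  have h1 : d M * 3 ^ (M:ℕ) = -(∑ i ∈ t.erase M, d i * 3 ^ (i : ℕ)) := by linarith
  have h2 : |d M * 3 ^ (M:ℕ)| = 3 ^ (M:ℕ) := by
    rw [abs_mul, habsM, abs_pow]; norm_num
  rw [h1, abs_neg] at h2
  omega

/-- With `f(a) = Σ aᵢ 3ⁱ` and `f_j(a) = Σ (1 - 2·𝟙[i=j]) aᵢ 3ⁱ`: for every `j` and all
`a, b ∈ {0,1}^k` with `a_j ≠ b_j` that differ in at least two coordinates,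
`|f(a) − f(b)| ≠ |f_j(a) − f_j(b)|`. -/
theorem stmt19 (k : ℕ) (hk : 0 < k)
    (f : (Fin k → Fin 2) → ℝ)
    (hf : f = fun a => ∑ i : Fin k, (a i : ℝ) * 3 ^ (i : ℕ))
    (F : Fin k → (Fin k → Fin 2) → ℝ)
    (hF : F = fun j a => ∑ i : Fin k,
      (1 - 2 * (if i = j then (1 : ℝ) else 0)) * (a i : ℝ) * 3 ^ (i : ℕ)) :
    ∀ (j : Fin k) (a b : Fin k → Fin 2), a j ≠ b j →
      2 ≤ (Finset.univ.filter fun i => a i ≠ b i).card →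
      |f a - f b| ≠ |F j a - F j b| := by
  intro j a b hj hcard
  set e : Fin k → ℤ := fun i => (a i : ℤ) - (b i : ℤ) with he
  have habs : ∀ i, |e i| ≤ 1 := by
    intro i
    have h1 : (a i : ℕ) < 2 := (a i).isLt
    have h2 : (b i : ℕ) < 2 := (b i).isLt
    simp only [he, abs_le]
    omega
  have hezero : ∀ i, e i = 0 → a i = b i := by
    intro i h
    have : (a i : ℕ) = (b i : ℕ) := by simp only [he] at h; omega
    exact Fin.ext this
  have hej : e j ≠ 0 := fun h => hj (hezero j h)
  set S : ℤ := ∑ i, e i * 3 ^ (i : ℕ) with hS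
  set T : ℤ := S - 2 * e j * 3 ^ (j : ℕ) with hT
  have hfS : f a - f b = (S : ℝ) := by
    subst hf
    simp only [hS, he]
    push_cast
    rw [← Finset.sum_sub_distrib]
    apply Finset.sum_congr rfl
    intro i _
    ring
  have hFT : F j a - F j b = (T : ℝ) := by
    subst hF
    simp only [hT, hS, he]
    push_cast
    have key : ∑ i : Fin k, (2 * (if i = j then (1:ℝ) else 0)) * ((a i : ℝ) - b i) * 3 ^ (i:ℕ)
        = 2 * ((a j : ℝ) - b j) * 3 ^ (j:ℕ) := by
      rw [Finset.sum_eq_single j]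
      · simp
      · intro i _ hij; simp [hij]
      · simp
    rw [← key, eq_sub_iff_add_eq, ← Finset.sum_sub_distrib, ← Finset.sum_add_distrib]
    apply Finset.sum_congr rfl
    intro i _
    by_cases h : i = j <;> simp [h] <;> ring
  rw [hfS, hFT, ← Int.cast_abs, ← Int.cast_abs, Ne, Int.cast_inj]
  intro habseq
  rcases abs_eq_abs.1 habseq with h | h
  · rw [hT] at h
    have : e j * 3 ^ (j:ℕ) = 0 := by linarith
    rcases mul_eq_zero.1 this with h' | h'
    · exact hej h'
    · exact absurd h' (by positivity)
  · -- S = -T : Σ_{i≠j} e i 3^i = 0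
    have hsplit : S = e j * 3 ^ (j:ℕ) + ∑ i ∈ Finset.univ.erase j, e i * 3 ^ (i : ℕ) := by
      rw [hS, ← Finset.add_sum_erase _ _ (Finset.mem_univ j)]
    have hzero : ∑ i ∈ Finset.univ.erase j, e i * 3 ^ (i : ℕ) = 0 := by
      rw [hT] at h
      linarith [hsplit]
    obtain ⟨x, hx, y, hy, hxy⟩ := Finset.one_lt_card.1 hcard
    have hxne : a x ≠ b x := (Finset.mem_filter.1 hx).2
    have hyne : a y ≠ b y := (Finset.mem_filter.1 hy).2
    have : ∃ m : Fin k, m ≠ j ∧ e m ≠ 0 := by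
      by_cases hxj : x = j
      · exact ⟨y, by rw [← hxj]; exact fun h' => hxy h'.symm,
          fun h' => hyne (hezero y h')⟩
      · exact ⟨x, hxj, fun h' => hxne (hezero x h')⟩
    obtain ⟨m, hmj, hme⟩ := this
    exact aux_sum_ne_zero k _ e habs m (Finset.mem_erase.2 ⟨hmj, Finset.mem_univ m⟩) hme hzero
end
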